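/- arXiv:2303.15897 — 6 statements merged into one kernel-verified Lean document; each statement's English description precedes it below -/
import Mathlib

section
/- Let n be an odd integer ≥ 1, let A be a subspace of Fin n → ℝ of odd dimension, let B := Aᗮ be its orthogonal complement for the standard inner product, and let b := dim B, assumed even and positive. Let f : Fin b → (Fin n → ℝ) be an orthonormal basis of B and set z_B := ∏ i, ι(f i) ∈ CliffordAlgebra Q (the product taken in increasing index order). Let g ∈ Spin(n), suppose σ : B →ₗ[ℝ] B is a linear map satisfying ι(σ(w)) = g·ι(w)·g⁻¹ for all w ∈ B, and suppose g·ι(v)·g⁻¹ lies in ι(A) for all v ∈ A. Set κ := det σ. Then z_B·g = κ • (g·z_B) in CliffordAlgebra Q (equivalently, since z_B is invertible, z_B·g·z_B⁻¹ = κ • g). -/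
/-- The standard positive-definite quadratic form `v ↦ ∑ i, (v i)^2` on `Fin n → ℝ`. -/
noncomputable def Qn (n : ℕ) : QuadraticForm ℝ (Fin n → ℝ) :=
  QuadraticMap.weightedSumSquares ℝ (fun _ : Fin n => (1 : ℝ))

/-- `Spin(n)`, the spin group of the standard quadratic form on `Fin n → ℝ`. -/
abbrev Spin (n : ℕ) : Type :=
  ↥(spinGroup (Qn n))

/-!
Write `z_B = ι(f 0) ⋯ ι(f (b-1))`. The factors pairwise anticommute, and permuting anticommuting
factors multiplies their product by the sign of the permutation. Hence the alternatization of
`(w_i) ↦ ∏ ι(w_i)` on `B` takes the value `b! • z_B` at `f` and the value `b! • g z_B g⁻¹` at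
`σ ∘ f`, since the `ι(σ (f i)) = g ι(f i) g⁻¹` anticommute as well. Like every alternating map of
top degree, it scales by `det σ` under `σ`, so `g z_B g⁻¹ = κ • z_B`. Finally `z_B * z_B = ±1` is
fixed by conjugation, which forces `κ * κ = 1`.
-/

open Equiv Function

section Anticommute

variable {A : Type*} [Ring A]

def PairwiseAnticommute {ι : Type*} (x : ι → A) : Prop :=
  Pairwise fun i j => x i * x j = -(x j * x i)

theorem PairwiseAnticommute.comp_injective {ι ι' : Type*} {x : ι → A}
    (hx : PairwiseAnticommute x) {f : ι' → ι} (hf : Injective f) : PairwiseAnticommute (x ∘ f) :=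
  fun _ _ hij => hx (hf.ne hij)

theorem PairwiseAnticommute.map {ι : Type*} {x : ι → A} (hx : PairwiseAnticommute x)
    {B F : Type*} [Ring B] [FunLike F A B] [RingHomClass F A B] (c : F) :
    PairwiseAnticommute (c ∘ x) := fun i j hij => by
  simp only [comp_apply]
  rw [← map_mul, ← map_mul, hx hij, map_neg]

theorem prod_ofFn_comp_swap_castSucc_succ {n : ℕ} {x : Fin (n + 1) → A}
    (hx : PairwiseAnticommute x) (i : Fin n) :
    (List.ofFn (x ∘ swap i.castSucc i.succ)).prod = -(List.ofFn x).prod := by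
  induction n with
  | zero => exact i.elim0
  | succ m ih =>
    cases i using Fin.cases with
    | zero =>
      have hfix : ∀ k : Fin m, swap (0 : Fin (m + 2)) 1 k.succ.succ = k.succ.succ := fun k =>
        swap_apply_of_ne_of_ne (Fin.succ_ne_zero _) (Fin.succ_succ_ne_one k)
      have h10 : x 1 * x 0 = -(x 0 * x 1) := hx one_ne_zero
      simp [List.ofFn_succ, hfix, ← mul_assoc, h10]
    | succ j =>
      rw [← Fin.succ_castSucc]
      have hsucc : ∀ k : Fin (m + 1), swap j.castSucc.succ j.succ.succ k.succ
          = (swap j.castSucc j.succ k).succ := (Fin.succ_injective _).swap_apply _ _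
      have h0 : swap j.castSucc.succ j.succ.succ 0 = 0 :=
        swap_apply_of_ne_of_ne (Fin.succ_ne_zero _).symm (Fin.succ_ne_zero _).symm
      have htail := ih (hx.comp_injective (Fin.succ_injective _)) j
      simp only [comp_def] at htail
      rw [List.ofFn_succ, List.ofFn_succ (f := x)]
      simp only [comp_apply, h0, hsucc, List.prod_cons, htail, mul_neg]

theorem prod_ofFn_comp_perm {k : ℕ} (π : Perm (Fin k)) {x : Fin k → A}
    (hx : PairwiseAnticommute x) :
    (List.ofFn (x ∘ π)).prod = Perm.sign π • (List.ofFn x).prod := by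
  revert x
  cases k with
  | zero => simp [Subsingleton.elim π 1]
  | succ n =>
    have hπ : π ∈ Submonoid.closure (Set.range fun i : Fin n => swap i.castSucc i.succ) := by
      simp [Perm.mclosure_swap_castSucc_succ]
    induction hπ using Submonoid.closure_induction with
    | mem _ h =>
      obtain ⟨i, rfl⟩ := h
      intro x hx
      rw [prod_ofFn_comp_swap_castSucc_succ hx,
        Perm.sign_swap (Fin.castSucc_lt_succ (i := i)).ne, Units.neg_smul, one_smul]
    | one => simp
    | mul σ τ _ _ hσ hτ =>
      intro x hx
      rw [Perm.coe_mul, ← comp_assoc, hτ (hx.comp_injective σ.injective), hσ hx,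
        Perm.sign_mul, mul_comm, mul_smul]

theorem List.prod_mul_prod_reverse_eq_one {M : Type*} [Monoid M] (l : List M)
    (hl : ∀ a ∈ l, a * a = 1) : l.prod * l.reverse.prod = 1 := by
  induction l with
  | nil => simp
  | cons a t ih =>
    rw [List.reverse_cons, List.prod_append, List.prod_cons, List.prod_singleton, mul_assoc,
      ← mul_assoc t.prod, ih fun x hx => hl x (List.mem_cons_of_mem a hx), one_mul,
      hl a List.mem_cons_self]

theorem prod_ofFn_mul_self {k : ℕ} {x : Fin k → A} (hx : PairwiseAnticommute x)
    (hsq : ∀ i, x i * x i = 1) :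
    (List.ofFn x).prod * (List.ofFn x).prod = Perm.sign (Fin.revPerm : Perm (Fin k)) • 1 := by
  have hrev : (List.ofFn x).reverse = List.ofFn (x ∘ Fin.revPerm) := by
    rw [List.ofFn_eq_map, List.ofFn_eq_map, ← List.map_reverse, List.finRange_reverse,
      List.map_map]
    rfl
  have h := (List.ofFn x).prod_mul_prod_reverse_eq_one (List.forall_mem_ofFn_iff.2 hsq)
  rw [hrev, prod_ofFn_comp_perm _ hx, mul_smul_comm] at h
  rw [← h, smul_smul, Int.units_mul_self, one_smul]

end Anticommute

theorem AlternatingMap.map_linearMap_comp_basis {K V W ι : Type*} [Field K] [AddCommGroup V]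
    [Module K V] [AddCommGroup W] [Module K W] [Fintype ι] [DecidableEq ι]
    (G : V [⋀^ι]→ₗ[K] W) (e : Module.Basis ι K V) (σ : V →ₗ[K] V) :
    G (σ ∘ e) = LinearMap.det σ • G e := by
  rw [← sub_eq_zero]
  refine (Module.forall_dual_apply_eq_zero_iff K _).mp fun φ => ?_
  have h := (φ.compAlternatingMap G).eq_smul_basis_det e
  rw [map_sub, map_smul, sub_eq_zero]
  change (φ.compAlternatingMap G) (σ ∘ e) = LinearMap.det σ • (φ.compAlternatingMap G) e
  rw [h]
  simp [Module.Basis.det_comp, mul_comm, mul_assoc]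

section AlternatingProd

variable {R V A : Type*} [CommRing R] [Ring A] [Algebra R A] [AddCommGroup V] [Module R V]

noncomputable def alternatingProd (k : ℕ) (T : V →ₗ[R] A) : V [⋀^Fin k]→ₗ[R] A :=
  MultilinearMap.alternatization ((MultilinearMap.mkPiAlgebraFin R k A).compLinearMap fun _ => T)

theorem alternatingProd_apply_of_pairwiseAnticommute {k : ℕ} (T : V →ₗ[R] A) {w : Fin k → V}
    (hw : PairwiseAnticommute (T ∘ w)) :
    alternatingProd k T w = k.factorial • (List.ofFn (T ∘ w)).prod := by
  have hterm : ∀ π : Perm (Fin k), Perm.sign π •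
      ((MultilinearMap.mkPiAlgebraFin R k A).compLinearMap fun _ => T).domDomCongr π w
        = (List.ofFn (T ∘ w)).prod := fun π => by
    rw [MultilinearMap.domDomCongr_apply, MultilinearMap.compLinearMap_apply,
      MultilinearMap.mkPiAlgebraFin_apply]
    exact (congrArg _ (prod_ofFn_comp_perm π hw)).trans
      (by rw [smul_smul, Int.units_mul_self, one_smul])
  rw [alternatingProd, MultilinearMap.alternatization_apply,
    Finset.sum_congr rfl fun π _ => hterm π, Finset.sum_const, Finset.card_univ,
    Fintype.card_perm, Fintype.card_fin]

end AlternatingProd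

section Conjugation

variable {K V A : Type*} [Field K] [CharZero K] [Ring A] [Algebra K A] [AddCommGroup V]
  [Module K V] {k : ℕ}

theorem prod_ofFn_comp_linearMap_eq_det_smul (T : V →ₗ[K] A) (e : Module.Basis (Fin k) K V)
    (σ : V →ₗ[K] V) (he : PairwiseAnticommute (T ∘ e))
    (hσe : PairwiseAnticommute (T ∘ σ ∘ e)) :
    (List.ofFn (T ∘ σ ∘ e)).prod = LinearMap.det σ • (List.ofFn (T ∘ e)).prod := by
  have h := (alternatingProd k T).map_linearMap_comp_basis e σ
  rw [alternatingProd_apply_of_pairwiseAnticommute T hσe,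
    alternatingProd_apply_of_pairwiseAnticommute T he, smul_comm,
    ← Nat.cast_smul_eq_nsmul K, ← Nat.cast_smul_eq_nsmul K] at h
  exact smul_right_injective A (Nat.cast_ne_zero.2 k.factorial_ne_zero) h

theorem prod_ofFn_mul_eq_det_smul_mul [Nontrivial A] (T : V →ₗ[K] A)
    (e : Module.Basis (Fin k) K V) (he : PairwiseAnticommute (T ∘ e))
    (hsq : ∀ i, T (e i) * T (e i) = 1) (u : Aˣ) (σ : V →ₗ[K] V)
    (hσ : ∀ w, T (σ w) = u * T w * ↑u⁻¹) :
    (List.ofFn (T ∘ e)).prod * u = LinearMap.det σ • (u * (List.ofFn (T ∘ e)).prod) := by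
  set c := MulSemiringAction.toRingHom (ConjAct Aˣ) A (ConjAct.toConjAct u)
  have hc : ∀ a, c a = u * a * ↑u⁻¹ := ConjAct.units_smul_def _
  have hTσ : T ∘ σ ∘ e = c ∘ T ∘ e := funext fun i => (hσ _).trans (hc _).symm
  set P := (List.ofFn (T ∘ e)).prod
  have hconj : c P = LinearMap.det σ • P := by
    rw [← prod_ofFn_comp_linearMap_eq_det_smul T e σ he (hTσ ▸ he.map c), hTσ,
      map_list_prod, List.map_ofFn]
  have hdet_sq : LinearMap.det σ * LinearMap.det σ = 1 := by
    have hPP := prod_ofFn_mul_self he hsq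
    have hfix : c (P * P) = P * P := by
      rw [hPP, Units.smul_def, map_zsmul, map_one]
    rw [map_mul, hconj, smul_mul_smul_comm] at hfix
    have hne : P * P ≠ 0 := hPP ▸ (smul_eq_zero_iff_eq _).not.2 one_ne_zero
    have hzero : (LinearMap.det σ * LinearMap.det σ - 1) • (P * P) = 0 := by
      rw [sub_smul, one_smul, hfix, sub_self]
    exact sub_eq_zero.1 ((smul_eq_zero.1 hzero).resolve_right hne)
  calc P * u = (LinearMap.det σ * LinearMap.det σ) • (P * u) := by rw [hdet_sq, one_smul]
    _ = LinearMap.det σ • (c P * u) := by rw [hconj, mul_smul, smul_mul_assoc]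
    _ = LinearMap.det σ • (u * P) := by rw [hc, Units.inv_mul_cancel_right]

end Conjugation

theorem Qn_apply {n : ℕ} (v : Fin n → ℝ) : Qn n v = ∑ i, v i * v i := by
  simp [Qn, QuadraticMap.weightedSumSquares_apply]

theorem polar_Qn {n : ℕ} (u v : Fin n → ℝ) :
    QuadraticMap.polar (Qn n) u v = 2 * ∑ i, u i * v i := by
  simp only [QuadraticMap.polar, Qn_apply, Pi.add_apply, ← Finset.sum_sub_distrib, Finset.mul_sum]
  exact Finset.sum_congr rfl fun i _ => by ring

theorem zB_conj_general (n : ℕ)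
    (B : Submodule ℝ (Fin n → ℝ))
    (b : ℕ)
    (f : Fin b → (Fin n → ℝ))
    (hforth : ∀ i j, (∑ k, f i k * f j k) = if i = j then (1 : ℝ) else 0)
    (hfspan : Submodule.span ℝ (Set.range f) = B)
    (zB : CliffordAlgebra (Qn n))
    (hzB : zB = ((List.finRange b).map (fun i => CliffordAlgebra.ι (Qn n) (f i))).prod)
    (g : Spin n)
    (σ : B →ₗ[ℝ] B)
    (hσ : ∀ w : B,
      CliffordAlgebra.ι (Qn n) ((σ w : B) : Fin n → ℝ) =
        ((g : Spin n) : CliffordAlgebra (Qn n)) *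
          CliffordAlgebra.ι (Qn n) ((w : B) : Fin n → ℝ) *
          ((g⁻¹ : Spin n) : CliffordAlgebra (Qn n)))
    (κ : ℝ) (hκ : κ = LinearMap.det σ) :
    zB * ((g : Spin n) : CliffordAlgebra (Qn n)) =
      κ • (((g : Spin n) : CliffordAlgebra (Qn n)) * zB) := by
  have hpolar : ∀ i j, QuadraticMap.polar (Qn n) (f i) (f j) = if i = j then 2 else 0 := by
    intro i j; rw [polar_Qn, hforth]; split_ifs <;> norm_num
  have hli : LinearIndependent ℝ f :=
    LinearMap.BilinForm.linearIndependent_of_iIsOrtho (B := (Qn n).polarBilin)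
      (fun i j hij => (hpolar i j).trans (if_neg hij)) (fun i => by simp [hpolar])
  let e : Module.Basis (Fin b) ℝ B := (Module.Basis.span hli).map (LinearEquiv.ofEq _ _ hfspan)
  set T := (CliffordAlgebra.ι (Qn n)).comp B.subtype
  have hTe : T ∘ e = CliffordAlgebra.ι (Qn n) ∘ f :=
    funext fun i => by simp [T, e, Module.Basis.span_apply]
  have hanti : PairwiseAnticommute (CliffordAlgebra.ι (Qn n) ∘ f) := fun i j hij =>
    CliffordAlgebra.ι_mul_ι_comm_of_isOrtho ((Qn n).isOrtho_polarBilin.1 (by simp [hpolar, hij]))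
  have hsq : ∀ i, T (e i) * T (e i) = 1 := fun i => by
    rw [show T (e i) = _ from congrFun hTe i, comp_apply, CliffordAlgebra.ι_sq_scalar, Qn_apply,
      hforth, if_pos rfl, map_one]
  have h := prod_ofFn_mul_eq_det_smul_mul T e (hTe ▸ hanti) hsq (spinGroup.toUnits g) σ hσ
  rw [hTe, List.ofFn_eq_map] at h
  subst hzB hκ
  exact h

/-- Let `n` be odd, `A ⊆ ℝⁿ` a subspace of odd dimension, `B = Aᗮ` its orthogonal
complement for the standard inner product, of even positive dimension `b`, `f` an
orthonormal basis of `B`, `z_B` the ordered product of the `ι(f i)`.  If `g ∈ Spin(n)`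
stabilizes `A` and acts on `B` via the linear map `σ` (through conjugation in the Clifford
algebra), and `κ = det σ`, then `z_B·g = κ • (g·z_B)`. -/
theorem zB_conj (n : ℕ) (hn : 1 ≤ n) (hodd : Odd n)
    (A B : Submodule ℝ (Fin n → ℝ))
    (hAodd : Odd (Module.finrank ℝ A))
    (hBperp : ∀ w : Fin n → ℝ, w ∈ B ↔ ∀ v ∈ A, (∑ i, v i * w i) = 0)
    (b : ℕ) (hb : b = Module.finrank ℝ B) (hbeven : Even b) (hbpos : 0 < b)
    (f : Fin b → (Fin n → ℝ))
    (hfB : ∀ i, f i ∈ B)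
    (hforth : ∀ i j, (∑ k, f i k * f j k) = if i = j then (1 : ℝ) else 0)
    (hfspan : Submodule.span ℝ (Set.range f) = B)
    (zB : CliffordAlgebra (Qn n))
    (hzB : zB = ((List.finRange b).map (fun i => CliffordAlgebra.ι (Qn n) (f i))).prod)
    (g : Spin n)
    (σ : B →ₗ[ℝ] B)
    (hσ : ∀ w : B,
      CliffordAlgebra.ι (Qn n) ((σ w : B) : Fin n → ℝ) =
        ((g : Spin n) : CliffordAlgebra (Qn n)) *
          CliffordAlgebra.ι (Qn n) ((w : B) : Fin n → ℝ) *
          ((g⁻¹ : Spin n) : CliffordAlgebra (Qn n)))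
    (hgA : ∀ v ∈ A,
      ((g : Spin n) : CliffordAlgebra (Qn n)) * CliffordAlgebra.ι (Qn n) v *
          ((g⁻¹ : Spin n) : CliffordAlgebra (Qn n)) ∈
        A.map (CliffordAlgebra.ι (Qn n)))
    (κ : ℝ) (hκ : κ = LinearMap.det σ) :
    zB * ((g : Spin n) : CliffordAlgebra (Qn n)) =
      κ • (((g : Spin n) : CliffordAlgebra (Qn n)) * zB) :=
  zB_conj_general n B b f hforth hfspan zB hzB g σ hσ κ hκ
end

section
/- Let n be an odd integer ≥ 1, r : Γ →* Spin(n) a homomorphism, ρ a standard-representation homomorphism for r, and η : Γ → {±1} a character. Then the following are equivalent: (i) for every γ ∈ Γ, the elements r(γ) and η(γ) • r(γ) of Spin(n) are conjugate in Spin(n); (ii) for every γ ∈ Γ, η(γ) is an eigenvalue of the linear map ρ(γ). -/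
/-- `ρ` is a standard-representation homomorphism for `r : Γ →* Spin(n)` if
`ι(ρ(γ)(v)) = r(γ)·ι(v)·r(γ)⁻¹` for all `γ` and `v`. -/
def IsStdRep {Γ : Type*} [Group Γ] {n : ℕ} (r : Γ →* Spin n)
    (ρ : Γ →* ((Fin n → ℝ) ≃ₗ[ℝ] (Fin n → ℝ))) : Prop :=
  ∀ (γ : Γ) (v : Fin n → ℝ),
    CliffordAlgebra.ι (Qn n) (ρ γ v) =
      ((r γ : Spin n) : CliffordAlgebra (Qn n)) * CliffordAlgebra.ι (Qn n) v *
        (((r γ)⁻¹ : Spin n) : CliffordAlgebra (Qn n))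

open CliffordAlgebra

section LeftTrace

variable (R A : Type*) [CommRing R] [Ring A] [Algebra R A]

noncomputable def leftTrace : A →ₗ[R] R :=
  (LinearMap.trace R A).comp (Algebra.lmul R A).toLinearMap

variable {R A}

theorem leftTrace_apply (x : A) :
    leftTrace R A x = LinearMap.trace R A (Algebra.lmul R A x) := rfl

theorem leftTrace_mul_comm (x y : A) : leftTrace R A (x * y) = leftTrace R A (y * x) := by
  simp only [leftTrace_apply, map_mul, LinearMap.trace_mul_comm]

theorem leftTrace_one [Module.Free R A] [Module.Finite R A] :
    leftTrace R A 1 = Module.finrank R A := by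
  rw [leftTrace_apply, map_one, LinearMap.trace_one]

theorem leftTrace_algEquiv (e : A ≃ₐ[R] A) (x : A) :
    leftTrace R A (e x) = leftTrace R A x := by
  have : Algebra.lmul R A (e x) = e.toLinearEquiv.conj (Algebra.lmul R A x) := by
    ext y
    simp [LinearEquiv.conj_apply]
  rw [leftTrace_apply, this, LinearMap.trace_conj', leftTrace_apply]

end LeftTrace

section Algebra

variable {R A : Type*} [CommRing R] [Ring A] [Algebra R A]

theorem mul_list_prod_ofFn_eq_smul {m : ℕ} (a : A) (f : Fin m → A) (c : Fin m → R)
    (h : ∀ i, a * f i = c i • (f i * a)) :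
    a * (List.ofFn f).prod = (∏ i, c i) • ((List.ofFn f).prod * a) := by
  induction m with
  | zero => simp
  | succ m ih =>
    rw [List.ofFn_succ, List.prod_cons, Fin.prod_univ_succ, ← mul_assoc, h, smul_mul_assoc,
      mul_assoc, ih _ _ fun i => h i.succ, mul_smul_comm, smul_smul, mul_assoc]

end Algebra

namespace CliffordAlgebra

section CommRing

variable {R M : Type*} [CommRing R] [AddCommGroup M] [Module R M] {Q : QuadraticForm R M}

theorem involute_eq_of_mem_range_ι_pow {k : ℕ} {x : CliffordAlgebra Q}
    (hx : x ∈ LinearMap.range (ι Q) ^ k) : involute x = (-1 : R) ^ k • x := by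
  induction hx using Submodule.pow_induction_on_left' with
  | algebraMap r => simp
  | add x y i _ _ hx hy => rw [map_add, hx, hy, smul_add]
  | mem_mul m hm i x _ hx =>
    obtain ⟨v, rfl⟩ := hm
    rw [map_mul, hx, involute_ι, pow_succ', mul_smul, mul_smul_comm, neg_one_smul, neg_mul,
      smul_neg]

theorem mul_ι_sub_smul_ι_mul_mem (u : M) :
    ∀ {k : ℕ} {x : CliffordAlgebra Q}, x ∈ LinearMap.range (ι Q) ^ (k + 1) →
      x * ι Q u - (-1 : R) ^ (k + 1) • (ι Q u * x) ∈ LinearMap.range (ι Q) ^ k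
  | 0, x, hx => by
    rw [zero_add, pow_one] at hx
    obtain ⟨w, rfl⟩ := hx
    rw [pow_one, neg_one_smul, sub_neg_eq_add, ι_mul_ι_add_swap, pow_zero]
    exact Submodule.algebraMap_mem _
  | k + 1, x, hx => by
    rw [pow_succ] at hx
    induction hx using Submodule.mul_induction_on' with
    | mem_mul_mem y hy m hm =>
      obtain ⟨w, rfl⟩ := hm
      have hyw := mul_ι_sub_smul_ι_mul_mem u hy
      have key : y * ι Q w * ι Q u - (-1 : R) ^ (k + 1 + 1) • (ι Q u * (y * ι Q w)) =
          QuadraticMap.polar Q w u • y -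
            (y * ι Q u - (-1 : R) ^ (k + 1) • (ι Q u * y)) * ι Q w := by
        rw [mul_assoc, ι_mul_ι_comm, mul_sub, ← Algebra.commutes, ← Algebra.smul_def, pow_succ,
          mul_neg_one, neg_smul, sub_mul, smul_mul_assoc]
        simp only [mul_assoc]
        abel
      rw [key]
      refine sub_mem (Submodule.smul_mem _ _ (by rwa [pow_succ])) ?_
      rw [pow_succ]
      exact Submodule.mul_mem_mul hyw (LinearMap.mem_range_self _ _)
    | add x _ y _ hx hy =>
      rw [add_mul, mul_add, smul_add]
      convert add_mem hx hy using 1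
      abel

theorem leftTrace_mul_mul_ι {s x : CliffordAlgebra Q} {k : ℕ}
    (hx : x ∈ LinearMap.range (ι Q) ^ k)
    (hvan : ∀ j < k, ∀ y ∈ LinearMap.range (ι Q) ^ j, leftTrace R _ (s * y) = 0) (u : M) :
    leftTrace R _ (s * (x * ι Q u)) = (-1) ^ k * leftTrace R _ (s * (ι Q u * x)) := by
  cases k with
  | zero =>
    obtain ⟨r, rfl⟩ := Submodule.mem_one.mp (by simpa using hx)
    rw [Algebra.commutes, pow_zero, one_mul]
  | succ k =>
    have h := hvan k k.lt_succ_self _ (mul_ι_sub_smul_ι_mul_mem u hx)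
    rwa [mul_sub, map_sub, mul_smul_comm, map_smul, smul_eq_mul, sub_eq_zero] at h

theorem leftTrace_eq_zero_of_involute_eq_neg [Invertible (2 : R)] {x : CliffordAlgebra Q}
    (hx : involute x = -x) : leftTrace R _ x = 0 := by
  have h := leftTrace_algEquiv involuteEquiv x
  rw [involuteEquiv_apply, hx, map_neg] at h
  have h2 : (2 : R) * leftTrace R _ x = 0 := by linear_combination -h
  rw [← one_mul (leftTrace R _ x), ← invOf_mul_self (2 : R), mul_assoc, h2, mul_zero]

theorem leftTrace_mul_eq_zero_of_neg_one_pow_eq [Invertible (2 : R)] {s x : CliffordAlgebra Q}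
    {ε : R} (hs : involute s = -ε • s) {k : ℕ} (hx : x ∈ LinearMap.range (ι Q) ^ k)
    (hk : (-1 : R) ^ k = ε) : leftTrace R _ (s * x) = 0 := by
  have hε : ε * ε = 1 := by rw [← hk, ← pow_add, ← two_mul, pow_mul, neg_one_sq, one_pow]
  refine leftTrace_eq_zero_of_involute_eq_neg ?_
  rw [map_mul, hs, involute_eq_of_mem_range_ι_pow hx, hk, smul_mul_smul_comm, neg_mul, hε,
    neg_one_smul]

theorem leftTrace_mul_eq_zero_of_surjective {s x : CliffordAlgebra Q} {f : Module.End R M}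
    (hf : ∀ v, s * ι Q v = ι Q (f v) * s) {ε : R}
    (hsurj : Function.Surjective (f - ε • 1 : Module.End R M))
    {j : ℕ} (hj : (-1 : R) ^ j = ε)
    (hvan : ∀ i < j, ∀ y ∈ LinearMap.range (ι Q) ^ i, leftTrace R _ (s * y) = 0)
    (hx : x ∈ LinearMap.range (ι Q) ^ (j + 1)) : leftTrace R _ (s * x) = 0 := by
  have hε : ε * ε = 1 := by rw [← hj, ← pow_add, ← two_mul, pow_mul, neg_one_sq, one_pow]
  rw [pow_succ'] at hx
  induction hx using Submodule.mul_induction_on' with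
  | mem_mul_mem m hm y hy =>
    obtain ⟨u, rfl⟩ := hm
    let φ : M →ₗ[R] R := leftTrace R _ ∘ₗ LinearMap.mulLeft R s ∘ₗ LinearMap.mulRight R y ∘ₗ ι Q
    have hφ : ∀ v, φ v = ε * φ (f v) := fun v => calc
      φ v = leftTrace R _ (ι Q (f v) * s * y) := by simp [φ, ← hf, mul_assoc]
      _ = leftTrace R _ (s * (y * ι Q (f v))) := by rw [mul_assoc, leftTrace_mul_comm, mul_assoc]
      _ = ε * φ (f v) := by simp [φ, leftTrace_mul_mul_ι hy hvan, hj]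
    obtain ⟨w, rfl⟩ := hsurj u
    change φ (f w - ε • w) = 0
    rw [map_sub, map_smul, hφ w, smul_eq_mul, ← mul_assoc, hε, one_mul, sub_self]
  | add x _ y _ hx hy => rw [mul_add, map_add, hx, hy, add_zero]

theorem ι_mul_ι_mem_spinGroup {a b : M} (ha : Q a = 1) (hb : Q b = 1) :
    ι Q a * ι Q b ∈ spinGroup Q := by
  have hsq {m : M} (hm : Q m = 1) : ι Q m * ι Q m = 1 := by rw [ι_sq_scalar, hm, map_one]
  have hstar : star (ι Q a * ι Q b) = ι Q b * ι Q a := by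
    rw [star_mul, star_ι, star_ι, neg_mul_neg]
  refine spinGroup.mem_iff.mpr ⟨pinGroup.mem_iff.mpr ⟨?_, ?_⟩, ?_⟩
  · refine ⟨⟨ι Q a, ι Q a, hsq ha, hsq ha⟩ * ⟨ι Q b, ι Q b, hsq hb, hsq hb⟩, ?_, rfl⟩
    exact mul_mem (Subgroup.subset_closure ⟨a, rfl⟩) (Subgroup.subset_closure ⟨b, rfl⟩)
  · rw [Unitary.mem_iff, hstar, mul_assoc, ← mul_assoc (ι Q a), hsq ha, one_mul, hsq hb,
      mul_assoc, ← mul_assoc (ι Q b), hsq hb, one_mul, hsq ha]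
    exact ⟨rfl, rfl⟩
  · rw [← Subalgebra.mem_toSubmodule, even_toSubmodule]
    exact ι_mul_ι_mem_evenOdd_zero Q a b

end CommRing

section Field

variable {K V : Type*} [Field K] [Invertible (2 : K)] [AddCommGroup V] [Module K V]
  [FiniteDimensional K V]

instance (Q : QuadraticForm K V) : Module.Finite K (CliffordAlgebra Q) :=
  have := Module.Finite.of_basis (Module.finBasis K V).ExteriorAlgebra
  Module.Finite.equiv (equivExterior Q).symm

theorem finrank_eq_two_pow (Q : QuadraticForm K V) :
    Module.finrank K (CliffordAlgebra Q) = 2 ^ Module.finrank K V := by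
  rw [(equivExterior Q).finrank_eq,
    Module.finrank_eq_card_basis (Module.finBasis K V).ExteriorAlgebra, Fintype.card_finset,
    Fintype.card_fin]

variable {Q : QuadraticForm K V}

theorem leftTrace_one_ne_zero : leftTrace K (CliffordAlgebra Q) 1 ≠ 0 := by
  rw [leftTrace_one, finrank_eq_two_pow]
  push_cast
  exact pow_ne_zero _ (Invertible.ne_zero 2)

theorem exists_apply_eq_smul_of_mul_ι_eq {s : CliffordAlgebra Q} (hs : IsUnit s)
    {f : Module.End K V} (hf : ∀ v, s * ι Q v = ι Q (f v) * s) {ε : K} (hε : ε = 1 ∨ ε = -1)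
    (hinv : involute s = -ε • s) (hτ : leftTrace K _ s = 0) : ∃ v, v ≠ 0 ∧ f v = ε • v := by
  by_contra! hno
  have hsurj : Function.Surjective (f - ε • 1 : Module.End K V) := by
    refine LinearMap.injective_iff_surjective.mp (LinearMap.ker_eq_bot.mp ?_)
    refine LinearMap.ker_eq_bot'.mpr fun v hv => by_contra fun h0 => hno v h0 ?_
    simpa [sub_eq_zero] using hv
  have hvan : ∀ k, ∀ x ∈ LinearMap.range (ι Q) ^ k, leftTrace K _ (s * x) = 0 := by
    intro k
    induction k using Nat.strong_induction_on with | _ k ih => ?_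
    intro x hx
    rcases k with _ | j
    · obtain ⟨r, rfl⟩ := Submodule.mem_one.mp (by simpa using hx)
      rw [← Algebra.commutes, ← Algebra.smul_def, map_smul, hτ, smul_zero]
    rcases hε with rfl | rfl <;> rcases neg_one_pow_eq_or K j with hj | hj
    · exact leftTrace_mul_eq_zero_of_surjective hf hsurj hj (fun i hi => ih i (by omega)) hx
    · exact leftTrace_mul_eq_zero_of_neg_one_pow_eq hinv hx (by rw [pow_succ, hj]; norm_num)
    · exact leftTrace_mul_eq_zero_of_neg_one_pow_eq hinv hx (by rw [pow_succ, hj]; norm_num)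
    · exact leftTrace_mul_eq_zero_of_surjective hf hsurj hj (fun i hi => ih i (by omega)) hx
  have hall : ∀ x, leftTrace K _ (s * x) = 0 := by
    intro x
    have hx : x ∈ ⨆ k, LinearMap.range (ι Q) ^ k := by rw [iSup_ι_range_eq_top]; trivial
    induction hx using Submodule.iSup_induction' with
    | mem k x hx => exact hvan k x hx
    | zero => rw [mul_zero, map_zero]
    | add x y _ _ hx hy => rw [mul_add, map_add, hx, hy, add_zero]
  obtain ⟨u, rfl⟩ := hs
  exact leftTrace_one_ne_zero (by simpa using hall ↑u⁻¹)

end Field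

end CliffordAlgebra

namespace spinGroup

variable {R M : Type*} [CommRing R] [AddCommGroup M] [Module R M] {Q : QuadraticForm R M}

theorem coe_inv_mul_self (x : spinGroup Q) :
    ((x⁻¹ : spinGroup Q) : CliffordAlgebra Q) * x = 1 := by
  rw [← MulMemClass.coe_mul, inv_mul_cancel, OneMemClass.coe_one]

theorem coe_mul_inv_self (x : spinGroup Q) :
    (x : CliffordAlgebra Q) * ((x⁻¹ : spinGroup Q) : CliffordAlgebra Q) = 1 := by
  rw [← MulMemClass.coe_mul, mul_inv_cancel, OneMemClass.coe_one]

theorem isUnit_coe (x : spinGroup Q) : IsUnit (x : CliffordAlgebra Q) :=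
  ⟨toUnits x, rfl⟩

end spinGroup

section Euclidean

variable {n : ℕ}

theorem Qn_single_one (i : Fin n) : Qn n (Pi.single i 1) = 1 := by
  simp [Qn, QuadraticMap.weightedSumSquares_apply, Pi.single_apply]

theorem Qn_isOrtho_single_one {i j : Fin n} (hij : i ≠ j) :
    (Qn n).IsOrtho (Pi.single i 1) (Pi.single j 1) := by
  rw [QuadraticMap.isOrtho_def]
  simp [Qn, QuadraticMap.weightedSumSquares_apply, Pi.single_apply, mul_add,
    Finset.sum_add_distrib, hij, hij.symm]

theorem Qn_pos {v : Fin n → ℝ} (hv : v ≠ 0) : 0 < Qn n v := by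
  obtain ⟨i, hi⟩ := Function.ne_iff.mp hv
  rw [Qn, QuadraticMap.weightedSumSquares_apply]
  exact Finset.sum_pos' (fun j _ => by simpa using mul_self_nonneg (v j))
    ⟨i, Finset.mem_univ _, by simpa using mul_self_pos.mpr hi⟩

theorem exists_Qn_smul_eq_one {v : Fin n → ℝ} (hv : v ≠ 0) : ∃ c : ℝ, Qn n (c • v) = 1 :=
  ⟨(√(Qn n v))⁻¹, by
    rw [QuadraticMap.map_smul, smul_eq_mul, ← mul_inv, Real.mul_self_sqrt (Qn_pos hv).le,
      inv_mul_cancel₀ (Qn_pos hv).ne']⟩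

noncomputable def volumeElement (n : ℕ) : CliffordAlgebra (Qn n) :=
  (List.ofFn fun i : Fin n => ι (Qn n) (Pi.single i 1)).prod

theorem isUnit_volumeElement : IsUnit (volumeElement n) := by
  refine List.prod_isUnit fun x hx => ?_
  obtain ⟨i, rfl⟩ := List.mem_ofFn.mp hx
  have h : ι (Qn n) (Pi.single i 1) * ι (Qn n) (Pi.single i 1) = 1 := by
    rw [ι_sq_scalar, Qn_single_one, map_one]
  exact ⟨⟨_, _, h, h⟩, rfl⟩

theorem involute_volumeElement (hodd : Odd n) : involute (volumeElement n) = -volumeElement n := by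
  rw [volumeElement, map_list_prod, List.map_ofFn]
  have : (involute ∘ fun i : Fin n => ι (Qn n) (Pi.single i 1)) =
      Neg.neg ∘ fun i : Fin n => ι (Qn n) (Pi.single i 1) := funext fun i => involute_ι _
  rw [this, ← List.map_ofFn, List.prod_map_neg, List.length_ofFn, hodd.neg_one_pow, neg_one_mul]

theorem ι_single_mul_volumeElement (hodd : Odd n) (j : Fin n) :
    ι (Qn n) (Pi.single j 1) * volumeElement n = volumeElement n * ι (Qn n) (Pi.single j 1) := by
  have h := mul_list_prod_ofFn_eq_smul (ι (Qn n) (Pi.single j 1))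
    (fun i : Fin n => ι (Qn n) (Pi.single i 1)) (fun i => if i = j then (1 : ℝ) else -1)
    fun i => by
      split_ifs with hij
      · rw [hij, one_smul]
      · rw [ι_mul_ι_comm_of_isOrtho (Qn_isOrtho_single_one (Ne.symm hij)), neg_one_smul]
  rwa [Finset.prod_ite, Finset.prod_const_one, one_mul, Finset.prod_const, Finset.filter_ne',
    Finset.card_erase_of_mem (Finset.mem_univ _), Finset.card_univ, Fintype.card_fin,
    (Nat.Odd.sub_odd hodd odd_one).neg_one_pow, one_smul] at h

theorem ι_mul_volumeElement (hodd : Odd n) (v : Fin n → ℝ) :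
    ι (Qn n) v * volumeElement n = volumeElement n * ι (Qn n) v := by
  have h := (Pi.basisFun ℝ (Fin n)).ext (f₁ := LinearMap.mulRight ℝ (volumeElement n) ∘ₗ ι (Qn n))
    (f₂ := LinearMap.mulLeft ℝ (volumeElement n) ∘ₗ ι (Qn n))
    fun j => by simpa using ι_single_mul_volumeElement hodd j
  exact LinearMap.congr_fun h v

end Euclidean

theorem IsStdRep.coe_mul_ι {Γ : Type*} [Group Γ] {n : ℕ} {r : Γ →* Spin n}
    {ρ : Γ →* ((Fin n → ℝ) ≃ₗ[ℝ] (Fin n → ℝ))} (hρ : IsStdRep r ρ) (γ : Γ) (v : Fin n → ℝ) :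
    (r γ : CliffordAlgebra (Qn n)) * ι (Qn n) v = ι (Qn n) (ρ γ v) * r γ := by
  rw [hρ γ v, mul_assoc _ _ (r γ : CliffordAlgebra (Qn n)), spinGroup.coe_inv_mul_self, mul_one]

namespace Spin

variable {n : ℕ} {x : Spin n} {f : Module.End ℝ (Fin n → ℝ)}

theorem exists_apply_eq_self_of_coe_mul_ι (hodd : Odd n)
    (hf : ∀ v, (x : CliffordAlgebra (Qn n)) * ι (Qn n) v = ι (Qn n) (f v) * x) :
    ∃ v, v ≠ 0 ∧ f v = v := by
  have hω : IsUnit (volumeElement n * (x : CliffordAlgebra (Qn n))) :=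
    isUnit_volumeElement.mul (spinGroup.isUnit_coe x)
  have hinv : involute (volumeElement n * (x : CliffordAlgebra (Qn n))) =
      -volumeElement n * (x : CliffordAlgebra (Qn n)) := by
    rw [map_mul, involute_volumeElement hodd, spinGroup.involute_eq x.2]
  simpa using exists_apply_eq_smul_of_mul_ι_eq hω
    (fun v => by rw [mul_assoc, hf, ← mul_assoc, ← ι_mul_volumeElement hodd, mul_assoc])
    (Or.inl rfl) (by rw [hinv, neg_one_smul, neg_mul])
    (leftTrace_eq_zero_of_involute_eq_neg (by rw [hinv, neg_mul]))

theorem exists_conj_eq_neg_iff_of_coe_mul_ι (hodd : Odd n)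
    (hf : ∀ v, (x : CliffordAlgebra (Qn n)) * ι (Qn n) v = ι (Qn n) (f v) * x) :
    (∃ g : Spin n, ((g * x * g⁻¹ : Spin n) : CliffordAlgebra (Qn n)) = -x) ↔
      ∃ v, v ≠ 0 ∧ f v = -v := by
  constructor
  · rintro ⟨g, hg⟩
    have h : leftTrace ℝ _ ((g * x * g⁻¹ : Spin n) : CliffordAlgebra (Qn n)) =
        leftTrace ℝ _ ((g⁻¹ * (g * x) : Spin n) : CliffordAlgebra (Qn n)) := by
      simp only [MulMemClass.coe_mul]
      exact leftTrace_mul_comm _ _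
    rw [hg, inv_mul_cancel_left, map_neg] at h
    simpa using exists_apply_eq_smul_of_mul_ι_eq (spinGroup.isUnit_coe x) hf (Or.inr rfl)
      (by rw [neg_neg, one_smul, spinGroup.involute_eq x.2]) (by linarith)
  · rintro ⟨v, hv0, hv⟩
    obtain ⟨w, hw0, hw⟩ := exists_apply_eq_self_of_coe_mul_ι hodd hf
    obtain ⟨c, hc⟩ := exists_Qn_smul_eq_one hv0
    obtain ⟨d, hd⟩ := exists_Qn_smul_eq_one hw0
    let g : Spin n := ⟨_, ι_mul_ι_mem_spinGroup hc hd⟩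
    have hxa : (x : CliffordAlgebra (Qn n)) * ι (Qn n) (c • v) = -(ι (Qn n) (c • v) * x) := by
      rw [hf, map_smul, hv, smul_neg, map_neg, neg_mul]
    have hxb : (x : CliffordAlgebra (Qn n)) * ι (Qn n) (d • w) = ι (Qn n) (d • w) * x := by
      rw [hf, map_smul, hw]
    have hgx : (g : CliffordAlgebra (Qn n)) * x = -(x * g) := by
      change ι (Qn n) (c • v) * ι (Qn n) (d • w) * x = -(x * (ι (Qn n) (c • v) * ι (Qn n) (d • w)))
      rw [mul_assoc, ← hxb, ← mul_assoc, ← mul_assoc, hxa, neg_mul, neg_neg]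
    refine ⟨g, ?_⟩
    rw [MulMemClass.coe_mul, MulMemClass.coe_mul, hgx, neg_mul, mul_assoc,
      spinGroup.coe_mul_inv_self, mul_one]

end Spin

theorem elementConjugate_twist_iff_eigenvalue_general
    {Γ : Type*} [Group Γ] (n : ℕ) (hodd : Odd n)
    (r : Γ →* Spin n) (ρ : Γ →* ((Fin n → ℝ) ≃ₗ[ℝ] (Fin n → ℝ))) (hρ : IsStdRep r ρ)
    (η : Γ →* ℝˣ) (hη : ∀ γ : Γ, η γ = 1 ∨ η γ = -1) :
    (∀ γ : Γ, ∃ g : Spin n,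
        ((g * r γ * g⁻¹ : Spin n) : CliffordAlgebra (Qn n)) =
          ((η γ : ℝˣ) : ℝ) • ((r γ : Spin n) : CliffordAlgebra (Qn n))) ↔
      (∀ γ : Γ, ∃ v : Fin n → ℝ, v ≠ 0 ∧ ρ γ v = ((η γ : ℝˣ) : ℝ) • v) := by
  refine forall_congr' fun γ => ?_
  have hf := hρ.coe_mul_ι γ
  rcases hη γ with h | h <;> simp only [h, Units.val_one, Units.val_neg, one_smul, neg_one_smul]
  · exact iff_of_true ⟨1, by simp⟩ (Spin.exists_apply_eq_self_of_coe_mul_ι hodd hf)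
  · exact Spin.exists_conj_eq_neg_iff_of_coe_mul_ι hodd hf

/-- For `n` odd, a character `η : Γ → {±1}` satisfies: `r(γ)` and `η(γ) • r(γ)` are conjugate
in `Spin(n)` for all `γ` if and only if `η(γ)` is an eigenvalue of `ρ(γ)` for all `γ`. -/
theorem elementConjugate_twist_iff_eigenvalue
    {Γ : Type*} [Group Γ] (n : ℕ) (hn : 1 ≤ n) (hodd : Odd n)
    (r : Γ →* Spin n) (ρ : Γ →* ((Fin n → ℝ) ≃ₗ[ℝ] (Fin n → ℝ))) (hρ : IsStdRep r ρ)
    (η : Γ →* ℝˣ) (hη : ∀ γ : Γ, η γ = 1 ∨ η γ = -1) :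
    (∀ γ : Γ, ∃ g : Spin n,
        ((g * r γ * g⁻¹ : Spin n) : CliffordAlgebra (Qn n)) =
          ((η γ : ℝˣ) : ℝ) • ((r γ : Spin n) : CliffordAlgebra (Qn n))) ↔
      (∀ γ : Γ, ∃ v : Fin n → ℝ, v ≠ 0 ∧ ρ γ v = ((η γ : ℝˣ) : ℝ) • v) :=
  elementConjugate_twist_iff_eigenvalue_general n hodd r ρ hρ η hη
end

section
/- Let Γ = ZMod 4 × ZMod 4, let a, b : Γ →* ℂˣ be the characters a(x,y) = i^x and b(x,y) = i^y, let η := b², and let r : Γ →* GL (Fin 4) ℂ be the diagonal representation r(γ) = diag(a(γ), a(γ)·b(γ)², b(γ), b(γ)·a(γ)²). Then: (1) for every γ ∈ Γ, the matrix η(γ) • r(γ) is similar to r(γ) or to r(γ)⁻¹; (2) there is no invertible complex 4×4 matrix u with u·r(γ)·u⁻¹ = η(γ) • r(γ) for all γ ∈ Γ; and (3) there is no invertible complex 4×4 matrix u with u·r(γ)⁻¹·u⁻¹ = η(γ) • r(γ) for all γ ∈ Γ. -/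
/-! Since `Γ` has exponent 4, `a(γ)² = ±1` and `b(γ)² = ±1`. In each of these four cases the
diagonal matrix `η(γ)·r(γ)` has the entries of `r(γ)` (if `η(γ) = 1`) or of `r(γ)⁻¹`
(if `η(γ) = -1`), up to a transposition, and diagonal matrices with permuted entries are conjugate
by a permutation matrix. Traces rule out a global conjugation: at `γ = (0,1)`,
`r(γ) = diag(1, -1, i, i)` has trace `2i ≠ 0` while `η(γ) = -1`; at `γ = (1,0)`, `η(γ) = 1` but
`r(γ) = diag(i, i, 1, -1)` and its inverse have traces `2i ≠ -2i`. -/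

open Matrix

theorem Matrix.exists_units_conj_diagonal_eq_diagonal_comp {n R : Type*} [Fintype n]
    [DecidableEq n] [CommRing R] (d : n → R) (σ : Equiv.Perm n) :
    ∃ u : (Matrix n n R)ˣ, (u : Matrix n n R) * diagonal d * (↑u⁻¹ : Matrix n n R) =
      diagonal (d ∘ σ) := by
  refine ⟨permMatrixHom.toHomUnits σ⁻¹, ?_⟩
  rw [← map_inv, MonoidHom.coe_toHomUnits, MonoidHom.coe_toHomUnits, permMatrixHom_apply,
    permMatrixHom_apply, inv_inv, PEquiv.toMatrix_toPEquiv_mul, PEquiv.mul_toMatrix_toPEquiv]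
  simp [submatrix_submatrix, ← Equiv.Perm.inv_def]

theorem Matrix.trace_eq_zero_of_units_conj_eq_smul {n R : Type*} [Fintype n] [DecidableEq n]
    [CommRing R] [NoZeroDivisors R] {u : (Matrix n n R)ˣ} {x : Matrix n n R} {c : R}
    (hc : c ≠ 1) (h : (u : Matrix n n R) * x * (↑u⁻¹ : Matrix n n R) = c • x) :
    trace x = 0 := by
  have htr : trace x = c * trace x := by
    simpa only [trace_units_conj, trace_smul, smul_eq_mul] using congrArg trace h
  have : (c - 1) * trace x = 0 := by linear_combination -htr
  exact (mul_eq_zero.mp this).resolve_left (sub_ne_zero.mpr hc)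

theorem sq_eq_one_or_sq_eq_neg_one_of_pow_four_eq_one {R : Type*} [Ring R] [NoZeroDivisors R]
    {x : R} (h : x ^ 4 = 1) : x ^ 2 = 1 ∨ x ^ 2 = -1 :=
  mul_self_eq_one_iff.mp (by rw [← pow_add]; exact h)

theorem pow_four_eq_one_of_zmod_four (γ : Multiplicative (ZMod 4 × ZMod 4)) : γ ^ 4 = 1 := by
  decide +revert

theorem sq_apply_eq_one_or_neg_one {R : Type*} [Ring R] [NoZeroDivisors R]
    (χ : Multiplicative (ZMod 4 × ZMod 4) →* Rˣ) (γ : Multiplicative (ZMod 4 × ZMod 4)) :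
    (χ γ : R) ^ 2 = 1 ∨ (χ γ : R) ^ 2 = -1 :=
  sq_eq_one_or_sq_eq_neg_one_of_pow_four_eq_one <| by
    rw [← Units.val_pow_eq_pow_val, ← map_pow, pow_four_eq_one_of_zmod_four, map_one,
      Units.val_one]

/-- The diagonal of `r(γ) = diag(a, a·b², b, b·a²)`, with `A = a(γ)` and `B = b(γ)`. -/
def reprDiag {K : Type*} [Field K] (A B : K) : Fin 4 → K := ![A, A * B ^ 2, B, B * A ^ 2]

theorem exists_perm_smul_reprDiag {K : Type*} [Field K] {A B : K}
    (hA : A ^ 2 = 1 ∨ A ^ 2 = -1) (hB : B ^ 2 = 1 ∨ B ^ 2 = -1) :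
    ∃ σ : Equiv.Perm (Fin 4), (B ^ 2 • reprDiag A B) ∘ σ = reprDiag A B ∨
      (B ^ 2 • reprDiag A B) ∘ σ = reprDiag A⁻¹ B⁻¹ := by
  rcases hB with hB | hB
  · exact ⟨1, .inl (by simp [hB])⟩
  have hB' : B⁻¹ = -B := by rw [inv_eq_of_mul_eq_one_right]; linear_combination -hB
  rcases hA with hA | hA
  · have hA' : A⁻¹ = A := by rw [inv_eq_of_mul_eq_one_right]; linear_combination hA
    refine ⟨Equiv.swap 0 1, .inr ?_⟩
    ext i; fin_cases i <;> simp [reprDiag, Equiv.swap_apply_of_ne_of_ne, hA, hB, hA', hB']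
  · have hA' : A⁻¹ = -A := by rw [inv_eq_of_mul_eq_one_right]; linear_combination -hA
    refine ⟨1, .inr ?_⟩
    ext i; fin_cases i <;> simp [reprDiag, hA, hB, hA', hB']

/-- Example 1: with `Γ = ZMod 4 × ZMod 4`, `a(x,y) = i^x`, `b(x,y) = i^y`, `η = b²` and
`r = diag(a, a·b², b, b·a²)`, the representations `η·r` and `r` are element conjugate in a
`Spin(1,6)`-subgroup (each `η(γ)·r(γ)` is similar to `r(γ)` or `r(γ)⁻¹`), but `η·r` is
conjugate neither to `r` nor to its dual. -/
theorem example1_element_conj_not_conj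
    (a b : Multiplicative (ZMod 4 × ZMod 4) →* ℂˣ)
    (ha : ∀ γ : Multiplicative (ZMod 4 × ZMod 4),
      (a γ : ℂ) = Complex.I ^ ((Multiplicative.toAdd γ).1).val)
    (hb : ∀ γ : Multiplicative (ZMod 4 × ZMod 4),
      (b γ : ℂ) = Complex.I ^ ((Multiplicative.toAdd γ).2).val)
    (r : Multiplicative (ZMod 4 × ZMod 4) →* GL (Fin 4) ℂ)
    (hr : ∀ γ, (r γ : Matrix (Fin 4) (Fin 4) ℂ) =
      Matrix.diagonal
        ![(a γ : ℂ), (a γ : ℂ) * (b γ : ℂ) ^ 2, (b γ : ℂ), (b γ : ℂ) * (a γ : ℂ) ^ 2]) :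
    (∀ γ,
      (∃ u : (Matrix (Fin 4) (Fin 4) ℂ)ˣ,
        (u : Matrix (Fin 4) (Fin 4) ℂ) * ((b γ : ℂ) ^ 2 • (r γ : Matrix (Fin 4) (Fin 4) ℂ)) *
          ((u⁻¹ : (Matrix (Fin 4) (Fin 4) ℂ)ˣ) : Matrix (Fin 4) (Fin 4) ℂ) =
            (r γ : Matrix (Fin 4) (Fin 4) ℂ)) ∨
      (∃ u : (Matrix (Fin 4) (Fin 4) ℂ)ˣ,
        (u : Matrix (Fin 4) (Fin 4) ℂ) * ((b γ : ℂ) ^ 2 • (r γ : Matrix (Fin 4) (Fin 4) ℂ)) *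
          ((u⁻¹ : (Matrix (Fin 4) (Fin 4) ℂ)ˣ) : Matrix (Fin 4) (Fin 4) ℂ) =
            (((r γ)⁻¹ : GL (Fin 4) ℂ) : Matrix (Fin 4) (Fin 4) ℂ))) ∧
    (¬ ∃ u : (Matrix (Fin 4) (Fin 4) ℂ)ˣ, ∀ γ,
      (u : Matrix (Fin 4) (Fin 4) ℂ) * (r γ : Matrix (Fin 4) (Fin 4) ℂ) *
          ((u⁻¹ : (Matrix (Fin 4) (Fin 4) ℂ)ˣ) : Matrix (Fin 4) (Fin 4) ℂ) =
        (b γ : ℂ) ^ 2 • (r γ : Matrix (Fin 4) (Fin 4) ℂ)) ∧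
    (¬ ∃ u : (Matrix (Fin 4) (Fin 4) ℂ)ˣ, ∀ γ,
      (u : Matrix (Fin 4) (Fin 4) ℂ) * (((r γ)⁻¹ : GL (Fin 4) ℂ) : Matrix (Fin 4) (Fin 4) ℂ) *
          ((u⁻¹ : (Matrix (Fin 4) (Fin 4) ℂ)ˣ) : Matrix (Fin 4) (Fin 4) ℂ) =
        (b γ : ℂ) ^ 2 • (r γ : Matrix (Fin 4) (Fin 4) ℂ)) := by
  have hr' : ∀ γ, (r γ : Matrix (Fin 4) (Fin 4) ℂ) = diagonal (reprDiag (a γ : ℂ) (b γ)) := hr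
  have hrinv : ∀ γ, (((r γ)⁻¹ : GL (Fin 4) ℂ) : Matrix (Fin 4) (Fin 4) ℂ) =
      diagonal (reprDiag (a γ : ℂ)⁻¹ (b γ : ℂ)⁻¹) := fun γ => by
    rw [← map_inv, hr', map_inv, map_inv, Units.val_inv_eq_inv_val, Units.val_inv_eq_inv_val]
  have hval : (1 : ZMod 4).val = 1 := rfl
  refine ⟨fun γ => ?_, ?_, ?_⟩
  · obtain ⟨σ, hσ⟩ := exists_perm_smul_reprDiag (sq_apply_eq_one_or_neg_one a γ)
      (sq_apply_eq_one_or_neg_one b γ)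
    obtain ⟨u, hu⟩ := exists_units_conj_diagonal_eq_diagonal_comp
      ((b γ : ℂ) ^ 2 • reprDiag (a γ : ℂ) (b γ)) σ
    rcases hσ with hσ | hσ
    · exact .inl ⟨u, by rw [hr', ← diagonal_smul, hu, hσ]⟩
    · exact .inr ⟨u, by rw [hr', hrinv, ← diagonal_smul, hu, hσ]⟩
  · rintro ⟨u, hu⟩
    set γ := Multiplicative.ofAdd ((0 : ZMod 4), (1 : ZMod 4))
    have hη : (b γ : ℂ) ^ 2 ≠ 1 := by norm_num [γ, hb, hval]
    have htr := trace_eq_zero_of_units_conj_eq_smul hη (hu γ)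
    simp [hr', reprDiag, trace_diagonal, Fin.sum_univ_four, γ, ha, hb, hval] at htr
  · rintro ⟨u, hu⟩
    set γ := Multiplicative.ofAdd ((1 : ZMod 4), (0 : ZMod 4))
    have htr := congrArg trace (hu γ)
    rw [trace_units_conj] at htr
    simp [hr', hrinv, reprDiag, trace_diagonal, Fin.sum_univ_four, γ, ha, hb, hval] at htr
    exact Complex.I_ne_zero (by linear_combination -htr / 4)
end

section
/- For every g = (g₁,g₂) ∈ 𝒢, the matrix υ(g) • ρ(g) is similar to ρ(g) or to ρ(g)⁻¹. Moreover, there is no invertible complex 4×4 matrix u such that u·ρ(g)·u⁻¹ = υ(g) • ρ(g) for all g ∈ 𝒢, and there is no invertible complex 4×4 matrix u such that u·conj(ρ(g))·u⁻¹ = υ(g) • ρ(g) for all g ∈ 𝒢. (That is, ρ and the twist υ·ρ are element conjugate but not conjugate in a Spin(1,6)-subgroup N of Spin(7) containing SU(4) with index 2.) -/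
/-!
Every `g ∈ O(2)^±` satisfies `g⁻¹ = μ(g)·gᵀ` and `gᵀ = ε(g)·adj g`. Hence `g` anticommutes with
the quarter turn when `ε(g) = -1` (and is then symmetric), and `g` is conjugate to `gᵀ` by
`diag(1,-1)` when `ε(g) = 1`. If `υ(g) = -1`, then `μ(g₂) = -1` and `ε(g₁) = -1`, which makes
`-gᵢ` conjugate to `gᵢ⁻¹` for both blocks, so `-ρ(g)` is conjugate to `ρ(g)⁻¹`.
A single conjugator cannot exist: it would preserve traces, but `ρ(diag(1,-1), i·1)` has trace `2i`
while its twist has trace `-2i`, and `ρ(i·1, diag(1,-1))` has trace `2i` while its complex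
conjugate has trace `-2i`.
-/

open Matrix

noncomputable section

/-- Membership in `O(2)^±`: a unitary `2×2` complex matrix `g` with `g·gᵀ = ±1`. -/
def IsOpm (g : Matrix (Fin 2) (Fin 2) ℂ) : Prop :=
  g ∈ Matrix.unitaryGroup (Fin 2) ℂ ∧ (g * gᵀ = 1 ∨ g * gᵀ = -1)

open Classical in
/-- The similitude factor `μ(g) ∈ {±1}` of `g ∈ O(2)^±`, defined by `g·gᵀ = μ(g)·1`. -/
noncomputable def mu (g : Matrix (Fin 2) (Fin 2) ℂ) : ℂ :=
  if g * gᵀ = 1 then 1 else -1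

/-- `ε(g) = μ(g)·det(g)` for `g ∈ O(2)^±`. -/
noncomputable def eps (g : Matrix (Fin 2) (Fin 2) ℂ) : ℂ :=
  mu g * g.det

/-- Membership in the group `𝒢 ⊆ O(2)^± × O(2)^±`: `det g₁ = det g₂` and `μ(g₂) = ε(g₁)`. -/
def memG (g : Matrix (Fin 2) (Fin 2) ℂ × Matrix (Fin 2) (Fin 2) ℂ) : Prop :=
  IsOpm g.1 ∧ IsOpm g.2 ∧ g.1.det = g.2.det ∧ mu g.2 = eps g.1

/-- The block-diagonal embedding `ρ(g₁,g₂) = diag(g₁,g₂)` into `4×4` matrices. -/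
noncomputable def rhoG (g : Matrix (Fin 2) (Fin 2) ℂ × Matrix (Fin 2) (Fin 2) ℂ) :
    Matrix (Fin 4) (Fin 4) ℂ :=
  Matrix.reindex finSumFinEquiv finSumFinEquiv (Matrix.fromBlocks g.1 0 0 g.2)

/-- Similarity of complex `4×4` matrices. -/
def MatSimilar (x y : Matrix (Fin 4) (Fin 4) ℂ) : Prop :=
  ∃ u : (Matrix (Fin 4) (Fin 4) ℂ)ˣ,
    (u : Matrix (Fin 4) (Fin 4) ℂ) * x * ((u⁻¹ : (Matrix (Fin 4) (Fin 4) ℂ)ˣ) : _) = y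

theorem Matrix.transpose_eq_smul_adjugate {n R : Type*} [CommRing R] [Fintype n] [DecidableEq n]
    {A : Matrix n n R} {c : R} (h : A * Aᵀ = c • 1) (hd : A.det * A.det = 1) :
    Aᵀ = (c * A.det) • adjugate A := by
  have key : A.det • Aᵀ = c • adjugate A :=
    calc A.det • Aᵀ = adjugate A * A * Aᵀ := by rw [adjugate_mul, smul_mul, one_mul]
      _ = c • adjugate A := by rw [Matrix.mul_assoc, h, mul_smul_comm, Matrix.mul_one]
  calc Aᵀ = (A.det * A.det) • Aᵀ := by rw [hd, one_smul]
    _ = (c * A.det) • adjugate A := by rw [mul_smul, key, smul_smul, mul_comm]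

theorem Matrix.trace_map_conj {n : Type*} [Fintype n] (A : Matrix n n ℂ) :
    (A.map (starRingEnd ℂ)).trace = starRingEnd ℂ A.trace :=
  (AddMonoidHom.map_trace (starRingEnd ℂ).toAddMonoidHom A).symm

theorem Prod.isConj_mk {M N : Type*} [Monoid M] [Monoid N] {a₁ b₁ : M} {a₂ b₂ : N}
    (h₁ : IsConj a₁ b₁) (h₂ : IsConj a₂ b₂) : IsConj (a₁, a₂) (b₁, b₂) := by
  obtain ⟨c₁, h₁⟩ := h₁
  obtain ⟨c₂, h₂⟩ := h₂
  exact ⟨MulEquiv.prodUnits.symm (c₁, c₂), Prod.ext h₁ h₂⟩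

def Matrix.fromBlocksDiagRingHom {R m n : Type*} [CommRing R] [Fintype m] [Fintype n]
    [DecidableEq m] [DecidableEq n] :
    Matrix m m R × Matrix n n R →+* Matrix (m ⊕ n) (m ⊕ n) R where
  toFun g := fromBlocks g.1 0 0 g.2
  map_one' := fromBlocks_one
  map_mul' g h := by simp [fromBlocks_multiply]
  map_zero' := fromBlocks_zero
  map_add' g h := by simp [fromBlocks_add]

theorem matSimilar_of_isConj {x y : Matrix (Fin 4) (Fin 4) ℂ} (h : IsConj x y) :
    MatSimilar x y := by
  obtain ⟨u, hu⟩ := h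
  exact ⟨u, (Units.mul_inv_eq_iff_eq_mul u).2 hu⟩

section OPlusMinus

variable {g : Matrix (Fin 2) (Fin 2) ℂ}

theorem mu_eq_one_or_eq_neg_one (g : Matrix (Fin 2) (Fin 2) ℂ) : mu g = 1 ∨ mu g = -1 := by
  unfold mu; split_ifs <;> simp

theorem mu_mul_self (g : Matrix (Fin 2) (Fin 2) ℂ) : mu g * mu g = 1 := by
  rcases mu_eq_one_or_eq_neg_one g with h | h <;> simp [h]

theorem mu_eq_one_of_mul_transpose_eq_one (h : g * gᵀ = 1) : mu g = 1 := if_pos h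

theorem mu_eq_neg_one_of_mul_transpose_eq_neg_one (h : g * gᵀ = -1) : mu g = -1 := by
  refine if_neg fun h' => ?_
  have := congrFun (congrFun (h'.symm.trans h) 0) 0
  norm_num at this

def diagSign : Matrix (Fin 2) (Fin 2) ℂ := !![1, 0; 0, -1]

def quarterTurn : Matrix (Fin 2) (Fin 2) ℂ := !![0, -1; 1, 0]

theorem diagSign_mul_self : diagSign * diagSign = 1 := by
  rw [diagSign, mul_fin_two, one_fin_two]; norm_num

theorem quarterTurn_mul_neg_self : quarterTurn * -quarterTurn = 1 := by
  rw [quarterTurn, mul_neg, mul_fin_two, one_fin_two]; norm_num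

theorem neg_quarterTurn_mul_self : -quarterTurn * quarterTurn = 1 := by
  rw [quarterTurn, neg_mul, mul_fin_two, one_fin_two]; norm_num

def diagSignUnit : (Matrix (Fin 2) (Fin 2) ℂ)ˣ :=
  ⟨diagSign, diagSign, diagSign_mul_self, diagSign_mul_self⟩

def quarterTurnUnit : (Matrix (Fin 2) (Fin 2) ℂ)ˣ :=
  ⟨quarterTurn, -quarterTurn, quarterTurn_mul_neg_self, neg_quarterTurn_mul_self⟩

namespace IsOpm

theorem mul_transpose (h : IsOpm g) : g * gᵀ = mu g • 1 := by
  rcases h.2 with h' | h'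
  · rw [mu_eq_one_of_mul_transpose_eq_one h', one_smul, h']
  · rw [mu_eq_neg_one_of_mul_transpose_eq_neg_one h', neg_one_smul, h']

theorem det_mul_self (h : IsOpm g) : g.det * g.det = 1 := by
  simpa [det_mul, sq, mu_mul_self] using congrArg det h.mul_transpose

theorem inv_eq (h : IsOpm g) : g⁻¹ = mu g • gᵀ :=
  inv_eq_right_inv <| by rw [mul_smul_comm, h.mul_transpose, smul_smul, mu_mul_self, one_smul]

theorem eps_eq_one_or_eq_neg_one (h : IsOpm g) : eps g = 1 ∨ eps g = -1 := by
  rcases mu_eq_one_or_eq_neg_one g with hμ | hμ <;>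
    rcases mul_self_eq_one_iff.1 h.det_mul_self with hd | hd <;> simp [eps, hμ, hd]

theorem transpose_eq (h : IsOpm g) : gᵀ = eps g • adjugate g :=
  transpose_eq_smul_adjugate h.mul_transpose h.det_mul_self

theorem entries_of_eps_eq_one (h : IsOpm g) (he : eps g = 1) :
    g 1 1 = g 0 0 ∧ g 1 0 = -g 0 1 := by
  have ht := h.transpose_eq
  rw [he, one_smul, adjugate_fin_two] at ht
  constructor
  · simpa using (congrFun (congrFun ht 0) 0).symm
  · simpa using congrFun (congrFun ht 0) 1

theorem entries_of_eps_eq_neg_one (h : IsOpm g) (he : eps g = -1) :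
    g 1 1 = -g 0 0 ∧ g 1 0 = g 0 1 := by
  have ht := h.transpose_eq
  rw [he, neg_one_smul, adjugate_fin_two] at ht
  constructor
  · simpa [neg_eq_iff_eq_neg] using (congrFun (congrFun ht 0) 0).symm
  · simpa using congrFun (congrFun ht 0) 1

theorem isConj_transpose (h : IsOpm g) : IsConj g gᵀ := by
  rcases h.eps_eq_one_or_eq_neg_one with he | he
  · obtain ⟨h₁₁, h₁₀⟩ := h.entries_of_eps_eq_one he
    refine ⟨diagSignUnit, show diagSign * g = gᵀ * diagSign from ?_⟩
    ext i j
    fin_cases i <;> fin_cases j <;> simp [diagSign, mul_apply, h₁₁, h₁₀]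
  · obtain ⟨-, h₁₀⟩ := h.entries_of_eps_eq_neg_one he
    have hsymm : gᵀ = g := by
      ext i j
      fin_cases i <;> fin_cases j <;> simp [h₁₀]
    rw [hsymm]

theorem isConj_neg_self (h : IsOpm g) (he : eps g = -1) : IsConj (-g) g := by
  obtain ⟨h₁₁, h₁₀⟩ := h.entries_of_eps_eq_neg_one he
  refine ⟨quarterTurnUnit, show quarterTurn * -g = g * quarterTurn from ?_⟩
  ext i j
  fin_cases i <;> fin_cases j <;> simp [quarterTurn, mul_apply, h₁₁, h₁₀]

theorem isConj_neg_inv (h : IsOpm g) (hg : mu g = -1 ∨ eps g = -1) : IsConj (-g) g⁻¹ := by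
  rw [h.inv_eq]
  rcases mu_eq_one_or_eq_neg_one g with hμ | hμ
  · rw [hμ, one_smul]
    exact (h.isConj_neg_self (hg.resolve_left (by norm_num [hμ]))).trans h.isConj_transpose
  · rw [hμ, neg_one_smul]
    obtain ⟨c, hc⟩ := h.isConj_transpose
    exact ⟨c, hc.neg_right⟩

end IsOpm

end OPlusMinus

def rhoRingHom : Matrix (Fin 2) (Fin 2) ℂ × Matrix (Fin 2) (Fin 2) ℂ →+* Matrix (Fin 4) (Fin 4) ℂ :=
  (reindexAlgEquiv ℂ ℂ finSumFinEquiv).toRingHom.comp Matrix.fromBlocksDiagRingHom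

section Rho

variable {g : Matrix (Fin 2) (Fin 2) ℂ × Matrix (Fin 2) (Fin 2) ℂ}

theorem rhoRingHom_apply (g : Matrix (Fin 2) (Fin 2) ℂ × Matrix (Fin 2) (Fin 2) ℂ) :
    rhoRingHom g = rhoG g := rfl

theorem trace_rhoG (g : Matrix (Fin 2) (Fin 2) ℂ × Matrix (Fin 2) (Fin 2) ℂ) :
    (rhoG g).trace = g.1.trace + g.2.trace :=
  calc (rhoG g).trace = (fromBlocks g.1 0 0 g.2).trace :=
        finSumFinEquiv.symm.sum_comp fun i => fromBlocks g.1 0 0 g.2 i i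
    _ = g.1.trace + g.2.trace := Fintype.sum_sum_type _

theorem rhoG_inv (h₁ : IsOpm g.1) (h₂ : IsOpm g.2) : (rhoG g)⁻¹ = rhoG g⁻¹ := by
  refine inv_eq_left_inv ?_
  rw [← rhoRingHom_apply, ← rhoRingHom_apply, ← map_mul, ← map_one rhoRingHom]
  congr 1
  exact Prod.ext (nonsing_inv_mul _ (IsUnit.of_mul_eq_one _ h₁.det_mul_self))
    (nonsing_inv_mul _ (IsUnit.of_mul_eq_one _ h₂.det_mul_self))

theorem memG.matSimilar_neg_inv (hg : memG g) (hμ : mu g.2 = -1) :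
    MatSimilar (-rhoG g) (rhoG g)⁻¹ := by
  obtain ⟨h₁, h₂, -, hε⟩ := hg
  rw [rhoG_inv h₁ h₂, ← rhoRingHom_apply, ← rhoRingHom_apply, ← map_neg]
  exact matSimilar_of_isConj <| rhoRingHom.toMonoidHom.map_isConj <|
    Prod.isConj_mk (h₁.isConj_neg_inv (Or.inr (hε ▸ hμ))) (h₂.isConj_neg_inv (Or.inl hμ))

end Rho

theorem diagSign_transpose : diagSignᵀ = diagSign := by
  ext i j; fin_cases i <;> fin_cases j <;> rfl

theorem star_diagSign : star diagSign = diagSign := by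
  ext i j; fin_cases i <;> fin_cases j <;> simp [diagSign]

theorem I_smul_one_mul_transpose :
    (Complex.I • 1 : Matrix (Fin 2) (Fin 2) ℂ) * (Complex.I • 1)ᵀ = -1 := by
  rw [transpose_smul, transpose_one, smul_mul_smul, Matrix.mul_one, Complex.I_mul_I, neg_one_smul]

theorem isOpm_diagSign : IsOpm diagSign := by
  refine ⟨?_, Or.inl ?_⟩
  · rw [mem_unitaryGroup_iff, star_diagSign, diagSign_mul_self]
  · rw [diagSign_transpose, diagSign_mul_self]

theorem isOpm_I_smul_one : IsOpm (Complex.I • 1) := by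
  refine ⟨?_, Or.inr I_smul_one_mul_transpose⟩
  rw [mem_unitaryGroup_iff, star_smul, star_one, smul_mul_smul, Complex.star_def, Complex.conj_I,
    Matrix.mul_one, mul_neg, Complex.I_mul_I, neg_neg, one_smul]

theorem mu_diagSign : mu diagSign = 1 :=
  mu_eq_one_of_mul_transpose_eq_one (by rw [diagSign_transpose, diagSign_mul_self])

theorem mu_I_smul_one : mu (Complex.I • 1) = -1 :=
  mu_eq_neg_one_of_mul_transpose_eq_neg_one I_smul_one_mul_transpose

theorem det_diagSign : diagSign.det = -1 := by
  simp [diagSign, det_fin_two_of]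

theorem det_I_smul_one : (Complex.I • 1 : Matrix (Fin 2) (Fin 2) ℂ).det = -1 := by
  simp

theorem trace_diagSign : diagSign.trace = 0 := by
  simp [diagSign, trace_fin_two_of]

theorem trace_I_smul_one : (Complex.I • 1 : Matrix (Fin 2) (Fin 2) ℂ).trace = 2 * Complex.I := by
  simp [trace_smul, mul_comm]

theorem memG_diagSign_I_smul_one : memG (diagSign, Complex.I • 1) :=
  ⟨isOpm_diagSign, isOpm_I_smul_one, by rw [det_diagSign, det_I_smul_one],
    by rw [mu_I_smul_one, eps, mu_diagSign, det_diagSign, one_mul]⟩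

theorem memG_I_smul_one_diagSign : memG (Complex.I • 1, diagSign) :=
  ⟨isOpm_I_smul_one, isOpm_diagSign, by rw [det_diagSign, det_I_smul_one],
    by rw [mu_diagSign, eps, mu_I_smul_one, det_I_smul_one]; norm_num⟩

/-- The twist of `ρ` by the character `υ` is element conjugate to `ρ` (in the
`Spin(1,6)`-subgroup `N`), but not conjugate to `ρ` in `N`: neither to `ρ` nor to its
complex conjugate. -/
theorem example2_element_conjugate_not_conjugate :
    (∀ g, memG g →
      (MatSimilar (mu g.2 • rhoG g) (rhoG g) ∨ MatSimilar (mu g.2 • rhoG g) (rhoG g)⁻¹)) ∧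
    (¬ ∃ u : (Matrix (Fin 4) (Fin 4) ℂ)ˣ, ∀ g, memG g →
      (u : Matrix (Fin 4) (Fin 4) ℂ) * rhoG g * ((u⁻¹ : (Matrix (Fin 4) (Fin 4) ℂ)ˣ) : _) =
        mu g.2 • rhoG g) ∧
    (¬ ∃ u : (Matrix (Fin 4) (Fin 4) ℂ)ˣ, ∀ g, memG g →
      (u : Matrix (Fin 4) (Fin 4) ℂ) * (rhoG g).map (starRingEnd ℂ) *
          ((u⁻¹ : (Matrix (Fin 4) (Fin 4) ℂ)ˣ) : _) =
        mu g.2 • rhoG g) := by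
  refine ⟨fun g hg => ?_, fun ⟨u, hu⟩ => ?_, fun ⟨u, hu⟩ => ?_⟩
  · rcases mu_eq_one_or_eq_neg_one g.2 with hμ | hμ
    · exact .inl ⟨1, by simp [hμ]⟩
    · exact .inr (by simpa [hμ] using hg.matSimilar_neg_inv hμ)
  · have ht := congrArg trace (hu _ memG_diagSign_I_smul_one)
    rw [trace_units_conj, trace_smul, mu_I_smul_one, trace_rhoG, trace_diagSign,
      trace_I_smul_one] at ht
    norm_num [Complex.ext_iff] at ht
  · have ht := congrArg trace (hu _ memG_I_smul_one_diagSign)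
    rw [trace_units_conj, trace_map_conj, trace_smul, mu_diagSign, trace_rhoG, trace_diagSign,
      trace_I_smul_one] at ht
    norm_num [Complex.ext_iff] at ht

end
end

section
/- Let Γ be a group, r : Γ →* GL (Fin 2) ℂ a 2-dimensional complex representation, and η : Γ →* ℂˣ a character. Assume that the character γ ↦ det(r(γ)) is not equal to η, and that there exists an η-similitude form for r. Then there exists a symmetric nondegenerate η-similitude form for r (in particular, the symmetric square of the representation contains the character η). -/
open Matrix

/-- A nondegenerate bilinear form on `Fin 2 → ℂ`. -/
def Nondeg (B : (Fin 2 → ℂ) →ₗ[ℂ] (Fin 2 → ℂ) →ₗ[ℂ] ℂ) : Prop :=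
  (∀ v, (∀ w, B v w = 0) → v = 0) ∧ (∀ w, (∀ v, B v w = 0) → w = 0)

/-- An `η`-similitude form for `r`: a nondegenerate bilinear form scaled by `η(γ)` under
the action of each `γ`. -/
def IsSimForm {Γ : Type*} [Group Γ] (r : Γ →* GL (Fin 2) ℂ) (η : Γ →* ℂˣ)
    (B : (Fin 2 → ℂ) →ₗ[ℂ] (Fin 2 → ℂ) →ₗ[ℂ] ℂ) : Prop :=
  Nondeg B ∧ ∀ (γ : Γ) (v w : Fin 2 → ℂ),
    B ((r γ : Matrix (Fin 2) (Fin 2) ℂ).mulVec v) ((r γ : Matrix (Fin 2) (Fin 2) ℂ).mulVec w) =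
      (η γ : ℂ) * B v w

lemma key_bilin_expand (B : (Fin 2 → ℂ) →ₗ[ℂ] (Fin 2 → ℂ) →ₗ[ℂ] ℂ) (v w : Fin 2 → ℂ) :
    B v w = v 0 * w 0 * B (Pi.single 0 1) (Pi.single 0 1)
      + v 0 * w 1 * B (Pi.single 0 1) (Pi.single 1 1)
      + v 1 * w 0 * B (Pi.single 1 1) (Pi.single 0 1)
      + v 1 * w 1 * B (Pi.single 1 1) (Pi.single 1 1) := by
  have hv : v = v 0 • (Pi.single 0 1 : Fin 2 → ℂ) + v 1 • (Pi.single 1 1 : Fin 2 → ℂ) := by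
    funext i; fin_cases i <;> simp
  have hw : w = w 0 • (Pi.single 0 1 : Fin 2 → ℂ) + w 1 • (Pi.single 1 1 : Fin 2 → ℂ) := by
    funext i; fin_cases i <;> simp
  rw [hv, hw]
  simp [map_add, _root_.map_smul, smul_eq_mul]
  ring

/-- If a 2-dimensional complex representation `r` has determinant character different from
`η` and carries an `η`-similitude form, then it carries a *symmetric* nondegenerate
`η`-similitude form. -/
theorem exists_symmetric_similitude_form
    {Γ : Type*} [Group Γ] (r : Γ →* GL (Fin 2) ℂ) (η : Γ →* ℂˣ)
    (hdet : ∃ γ : Γ, (r γ : Matrix (Fin 2) (Fin 2) ℂ).det ≠ (η γ : ℂ))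
    (hform : ∃ B, IsSimForm r η B) :
    ∃ B, IsSimForm r η B ∧ ∀ v w, B v w = B w v := by
  obtain ⟨B, hB⟩ := hform
  obtain ⟨γ, hγ⟩ := hdet
  set M : Matrix (Fin 2) (Fin 2) ℂ := (r γ : Matrix (Fin 2) (Fin 2) ℂ) with hM
  have hmv : ∀ j : Fin 2, M.mulVec (Pi.single j 1) = fun i => M i j := by
    intro j; funext i
    simp [mulVec, dotProduct, Fin.sum_univ_two]
    fin_cases j <;> simp
  have h01 := hB.2 γ (Pi.single 0 1) (Pi.single 1 1)
  have h10 := hB.2 γ (Pi.single 1 1) (Pi.single 0 1)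
  rw [← hM, hmv 0, hmv 1, key_bilin_expand B (fun i => M i 0) (fun i => M i 1)] at h01
  rw [← hM, hmv 0, hmv 1, key_bilin_expand B (fun i => M i 1) (fun i => M i 0)] at h10
  have hd : M.det = M 0 0 * M 1 1 - M 0 1 * M 1 0 := Matrix.det_fin_two M
  have hc : (M.det - (η γ : ℂ)) * (B (Pi.single 0 1) (Pi.single 1 1)
      - B (Pi.single 1 1) (Pi.single 0 1)) = 0 := by
    rw [hd]; linear_combination h01 - h10
  have hsym : B (Pi.single 0 1) (Pi.single 1 1) = B (Pi.single 1 1) (Pi.single 0 1) := by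
    rcases mul_eq_zero.1 hc with h | h
    · exact absurd (sub_eq_zero.1 h) hγ
    · exact sub_eq_zero.1 h
  refine ⟨B, hB, fun v w => ?_⟩
  rw [key_bilin_expand B v w, key_bilin_expand B w v, hsym]; ring
end

section
/- Assume V₀ ⊆ V is a Γ₀-invariant subspace such that: (i) V₀ is an internal direct sum of finitely many Γ₀-invariant subspaces, each of which is absolutely irreducible; and (ii) V = V₀ ⊕ ρ(z)(V₀) (internal direct sum). Then there exists a Γ₀-invariant subspace U₀ ⊆ V that is isomorphic to V₀ as a Γ₀-representation and such that V is the orthogonal direct sum of U₀ and ρ(z)(U₀), i.e. ρ(z)(U₀) = U₀ᗮ. -/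
/-!
Let `D = P₀ - P₁` be the difference of the orthogonal projections onto `V₀` and `V₁ = ρ(z)(V₀)`.
It is symmetric, commutes with `Γ₀` (which preserves `V₀` and, being normal, `V₁`), anticommutes
with `ρ(z)` (which swaps `V₀` and `V₁` because `z² ∈ Γ₀`), and is injective because
`V₀ ∩ V₁ = 0` and `V₀ᗮ ∩ V₁ᗮ = (V₀ + V₁)ᗮ = 0`. Take `U₀` to be the sum of the positive eigenspaces
of `D`: it is `Γ₀`-invariant, and `ρ(z)` carries it onto the sum of the negative eigenspaces, which
is `U₀ᗮ`. For `u ≠ 0` in `U₀ ∩ V₀ᗮ` we would get `0 < ⟪D u, u⟫ = -‖P₁ u‖²`; so `P₀` restricts to a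
`Γ₀`-equivariant injection `U₀ → V₀`, which is onto as both spaces have half the dimension of `V`.
-/

open Module Module.End

namespace Module.End

section Algebraic

variable {R E F : Type*} [CommRing R] [AddCommGroup E] [Module R E] [AddCommGroup F] [Module R F]

theorem map_eigenspace_of_conj (e : E ≃ₗ[R] F) {T : End R E} {S : End R F}
    (h : ∀ x, S (e x) = e (T x)) (μ : R) :
    (eigenspace T μ).map (e : E →ₗ[R] F) = eigenspace S μ := by
  ext y
  rw [Submodule.mem_map_equiv, mem_eigenspace_iff, mem_eigenspace_iff, ← e.injective.eq_iff,
    ← h, e.apply_symm_apply, map_smul, e.apply_symm_apply]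

theorem eigenspace_neg (T : End R E) (μ : R) : eigenspace (-T) μ = eigenspace T (-μ) := by
  ext x
  simp only [mem_eigenspace_iff, LinearMap.neg_apply, neg_smul, neg_eq_iff_eq_neg]

end Algebraic

variable {E F : Type*} [AddCommGroup E] [Module ℝ E] [AddCommGroup F] [Module ℝ F]

def posSpectralSubspace (T : End ℝ E) : Submodule ℝ E :=
  ⨆ (μ : ℝ) (_ : 0 < μ), eigenspace T μ

theorem map_posSpectralSubspace_of_conj (e : E ≃ₗ[ℝ] F) {T : End ℝ E} {S : End ℝ F}
    (h : ∀ x, S (e x) = e (T x)) :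
    (posSpectralSubspace T).map (e : E →ₗ[ℝ] F) = posSpectralSubspace S := by
  simp only [posSpectralSubspace, Submodule.map_iSup, map_eigenspace_of_conj e h]

theorem apply_mem_posSpectralSubspace (T : End ℝ E) :
    ∀ x ∈ posSpectralSubspace T, T x ∈ posSpectralSubspace T := by
  refine (iSup₂_le fun μ hμ y hy => ?_ : posSpectralSubspace T ≤ (posSpectralSubspace T).comap T)
  rw [Submodule.mem_comap, mem_eigenspace_iff.1 hy]
  exact le_iSup₂ (f := fun ν (_ : 0 < ν) => eigenspace T ν) μ hμ (Submodule.smul_mem _ μ hy)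

end Module.End

namespace LinearMap.IsSymmetric

variable {E : Type*} [NormedAddCommGroup E] [InnerProductSpace ℝ E] {T : E →ₗ[ℝ] E}

theorem inner_map_self_pos [FiniteDimensional ℝ E] (hT : T.IsSymmetric)
    (hpos : ∀ μ : ℝ, HasEigenvalue T μ → 0 < μ) {x : E} (hx : x ≠ 0) :
    0 < inner ℝ (T x) x := by
  set b := hT.eigenvectorBasis rfl
  have hsum : inner ℝ (T x) x = ∑ i, hT.eigenvalues rfl i * b.repr x i ^ 2 := by
    rw [← b.repr.inner_map_map, PiLp.inner_apply]
    refine Finset.sum_congr rfl fun i _ => ?_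
    rw [hT.eigenvectorBasis_apply_self_apply]
    simp only [Real.ringHom_apply, RCLike.inner_apply]
    ring
  obtain ⟨i, hi⟩ : ∃ i, b.repr x i ≠ 0 := by
    by_contra! h
    exact hx (b.repr.map_eq_zero_iff.1 (by ext j; exact h j))
  rw [hsum]
  refine Finset.sum_pos' (fun j _ => ?_) ⟨i, Finset.mem_univ i, ?_⟩
  · have := hpos _ (hT.hasEigenvalue_eigenvalues rfl j)
    positivity
  · have := hpos _ (hT.hasEigenvalue_eigenvalues rfl i)
    positivity

theorem isOrtho_eigenspace_posSpectralSubspace (hT : T.IsSymmetric) {μ : ℝ} (hμ : μ ≤ 0) :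
    eigenspace T μ ⟂ posSpectralSubspace T :=
  Submodule.isOrtho_iSup_right.2 fun _ => Submodule.isOrtho_iSup_right.2 fun hν =>
    hT.orthogonalFamily_eigenspaces.isOrtho (hμ.trans_lt hν).ne

theorem inner_map_self_pos_of_mem_posSpectralSubspace [FiniteDimensional ℝ E]
    (hT : T.IsSymmetric) {x : E} (hx : x ∈ posSpectralSubspace T) (hx₀ : x ≠ 0) :
    0 < inner ℝ (T x) x := by
  have hT' := hT.restrict_invariant (apply_mem_posSpectralSubspace T)
  refine hT'.inner_map_self_pos (fun μ hμ => ?_) (x := ⟨x, hx⟩) (by simpa using hx₀)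
  obtain ⟨v, hv, hv₀⟩ := hμ.exists_hasEigenvector
  by_contra! hμ₀
  have hvT : (v : E) ∈ eigenspace T μ := by
    rw [mem_eigenspace_iff] at hv ⊢
    exact congrArg Subtype.val hv
  exact hv₀ (Subtype.ext (Submodule.disjoint_def.1
    (hT.isOrtho_eigenspace_posSpectralSubspace hμ₀).disjoint _ hvT v.2))

theorem orthogonal_posSpectralSubspace [FiniteDimensional ℝ E] (hT : T.IsSymmetric)
    (hker : LinearMap.ker T = ⊥) : (posSpectralSubspace T)ᗮ = posSpectralSubspace (-T) := by
  have hle : posSpectralSubspace (-T) ≤ (posSpectralSubspace T)ᗮ := by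
    refine Submodule.isOrtho_iff_le.1 (Submodule.isOrtho_iSup_left.2 fun μ =>
      Submodule.isOrtho_iSup_left.2 fun hμ => ?_)
    rw [eigenspace_neg]
    exact hT.isOrtho_eigenspace_posSpectralSubspace (by linarith)
  have htop : posSpectralSubspace (-T) ⊔ posSpectralSubspace T = ⊤ := by
    rw [eq_top_iff, ← Submodule.orthogonal_eq_bot_iff.1
      hT.orthogonalComplement_iSup_eigenspaces_eq_bot]
    refine iSup_le fun μ => ?_
    rcases lt_trichotomy μ 0 with hμ | rfl | hμ
    · refine le_sup_of_le_left ?_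
      rw [← neg_neg μ, ← eigenspace_neg]
      exact le_iSup₂ (f := fun ν (_ : 0 < ν) => eigenspace (-T) ν) (-μ) (neg_pos.2 hμ)
    · rw [eigenspace_zero, hker]
      exact bot_le
    · exact le_sup_of_le_right (le_iSup₂ (f := fun ν (_ : 0 < ν) => eigenspace T ν) μ hμ)
  rw [← top_inf_eq (posSpectralSubspace T)ᗮ, ← htop, sup_inf_assoc_of_le _ hle,
    Submodule.inf_orthogonal_eq_bot, sup_bot_eq]

end LinearMap.IsSymmetric

namespace Submodule

variable {E : Type*} [NormedAddCommGroup E] [InnerProductSpace ℝ E]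

theorem starProjection_apply_of_map_eq (g : E ≃ₗᵢ[ℝ] E) {K K' : Submodule ℝ E}
    [K.HasOrthogonalProjection] [K'.HasOrthogonalProjection]
    (hK : K.map (g.toLinearEquiv : E →ₗ[ℝ] E) = K') (x : E) :
    K'.starProjection (g x) = g (K.starProjection x) := by
  subst hK
  rw [starProjection_map_apply, LinearIsometryEquiv.symm_apply_apply]

theorem starProjection_sub_apply_of_map_eq (g : E ≃ₗᵢ[ℝ] E) {K L K' L' : Submodule ℝ E}
    [K.HasOrthogonalProjection] [L.HasOrthogonalProjection] [K'.HasOrthogonalProjection]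
    [L'.HasOrthogonalProjection] (hK : K.map (g.toLinearEquiv : E →ₗ[ℝ] E) = K')
    (hL : L.map (g.toLinearEquiv : E →ₗ[ℝ] E) = L') (x : E) :
    ((K'.starProjection : E →ₗ[ℝ] E) - (L'.starProjection : E →ₗ[ℝ] E)) (g x) =
      g (((K.starProjection : E →ₗ[ℝ] E) - (L.starProjection : E →ₗ[ℝ] E)) x) := by
  simp only [LinearMap.sub_apply, ContinuousLinearMap.coe_coe, starProjection_apply_of_map_eq g hK,
    starProjection_apply_of_map_eq g hL, map_sub]

theorem ker_starProjection_sub_eq_bot {K L : Submodule ℝ E} [K.HasOrthogonalProjection]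
    [L.HasOrthogonalProjection] (hKL : IsCompl K L) :
    LinearMap.ker ((K.starProjection : E →ₗ[ℝ] E) - (L.starProjection : E →ₗ[ℝ] E)) = ⊥ := by
  refine eq_bot_iff.2 fun x hx => ?_
  have hKx : K.starProjection x = L.starProjection x := sub_eq_zero.1 hx
  have hK : K.starProjection x = 0 := disjoint_def.1 hKL.disjoint _
    (K.starProjection_apply_mem x) (hKx ▸ L.starProjection_apply_mem x)
  have hx' : x ∈ Kᗮ ⊓ Lᗮ :=
    ⟨(starProjection_apply_eq_zero_iff K).1 hK, (starProjection_apply_eq_zero_iff L).1 (hKx ▸ hK)⟩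
  rwa [inf_orthogonal, hKL.sup_eq_top, top_orthogonal_eq_bot] at hx'

theorem disjoint_posSpectralSubspace_starProjection_sub [FiniteDimensional ℝ E]
    (K L : Submodule ℝ E) :
    Disjoint
      (posSpectralSubspace ((K.starProjection : E →ₗ[ℝ] E) - (L.starProjection : E →ₗ[ℝ] E)))
      Kᗮ := by
  refine disjoint_def.2 fun x hx hxK => ?_
  by_contra hx₀
  have hpos := ((K.starProjection_isSymmetric).sub L.starProjection_isSymmetric)
    |>.inner_map_self_pos_of_mem_posSpectralSubspace hx hx₀
  have hL := (isSymmetricProjection_starProjection L).isPositive.inner_nonneg_left x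
  rw [LinearMap.sub_apply, ContinuousLinearMap.coe_coe, (starProjection_apply_eq_zero_iff K).2 hxK,
    zero_sub, inner_neg_left] at hpos
  exact (neg_pos.1 hpos).not_ge hL

theorem eq_of_starProjection_eq {U K : Submodule ℝ E} [K.HasOrthogonalProjection]
    (hUK : Disjoint U Kᗮ) {x y : E} (hx : x ∈ U) (hy : y ∈ U)
    (h : K.starProjection x = K.starProjection y) : x = y :=
  sub_eq_zero.1 (disjoint_def.1 hUK _ (sub_mem hx hy)
    ((starProjection_apply_eq_zero_iff K).1 (by rw [map_sub, h, sub_self])))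

theorem exists_linearEquiv_starProjection_apply [FiniteDimensional ℝ E] {U K : Submodule ℝ E}
    (hUK : Disjoint U Kᗮ) (hrank : finrank ℝ U = finrank ℝ K) :
    ∃ e : K ≃ₗ[ℝ] U, ∀ v : K, K.starProjection (e v) = v := by
  let f : U →ₗ[ℝ] K := K.orthogonalProjectionOnto.toLinearMap ∘ₗ U.subtype
  have hf : Function.Injective f := fun u₁ u₂ h =>
    Subtype.ext (eq_of_starProjection_eq hUK u₁.2 u₂.2 (congrArg Subtype.val h))
  refine ⟨(LinearMap.linearEquivOfInjective f hf hrank).symm, fun v => ?_⟩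
  exact congrArg Subtype.val ((LinearMap.linearEquivOfInjective f hf hrank).apply_symm_apply v)

theorem two_mul_finrank_eq_of_isCompl_map {K V : Type*} [DivisionRing K]
    [AddCommGroup V] [Module K V] [FiniteDimensional K V] (e : V ≃ₗ[K] V) {W : Submodule K V}
    (h : IsCompl W (W.map (e : V →ₗ[K] V))) : 2 * finrank K W = finrank K V := by
  rw [← finrank_add_eq_of_isCompl h, e.finrank_map_eq]
  ring

end Submodule

section IndexTwo

variable {V : Type*} [NormedAddCommGroup V] [InnerProductSpace ℝ V]
  {Γ : Type*} [Group Γ] (ρ : Γ →* (V ≃ₗᵢ[ℝ] V))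

theorem map_rep_map_rep (a b : Γ) (K : Submodule ℝ V) :
    (K.map ((ρ b).toLinearEquiv : V →ₗ[ℝ] V)).map ((ρ a).toLinearEquiv : V →ₗ[ℝ] V) =
      K.map ((ρ (a * b)).toLinearEquiv : V →ₗ[ℝ] V) := by
  rw [← Submodule.map_comp]
  congr 1
  ext v
  simp

variable {ρ} {Γ₀ : Subgroup Γ} {K : Submodule ℝ V}

theorem map_rep_eq_of_mem (hK : ∀ γ ∈ Γ₀, ∀ v ∈ K, ρ γ v ∈ K) {γ : Γ} (hγ : γ ∈ Γ₀) :
    K.map ((ρ γ).toLinearEquiv : V →ₗ[ℝ] V) = K := by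
  refine le_antisymm (Submodule.map_le_iff_le_comap.2 fun v hv => hK γ hγ v hv) fun v hv => ?_
  rw [Submodule.mem_map_equiv]
  simpa using hK γ⁻¹ (Γ₀.inv_mem hγ) v hv

theorem map_rep_map_rep_self_of_index_eq_two (hK : ∀ γ ∈ Γ₀, ∀ v ∈ K, ρ γ v ∈ K)
    (hΓ₀ : Γ₀.index = 2) (z : Γ) :
    (K.map ((ρ z).toLinearEquiv : V →ₗ[ℝ] V)).map ((ρ z).toLinearEquiv : V →ₗ[ℝ] V) = K := by
  rw [map_rep_map_rep, map_rep_eq_of_mem hK (Subgroup.mul_self_mem_of_index_two hΓ₀ z)]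

theorem map_rep_map_rep_of_index_eq_two (hK : ∀ γ ∈ Γ₀, ∀ v ∈ K, ρ γ v ∈ K)
    (hΓ₀ : Γ₀.index = 2) (z : Γ) {γ : Γ} (hγ : γ ∈ Γ₀) :
    (K.map ((ρ z).toLinearEquiv : V →ₗ[ℝ] V)).map ((ρ γ).toLinearEquiv : V →ₗ[ℝ] V) =
      K.map ((ρ z).toLinearEquiv : V →ₗ[ℝ] V) := by
  have hconj : z⁻¹ * γ * z⁻¹⁻¹ ∈ Γ₀ := (Subgroup.normal_of_index_eq_two hΓ₀).conj_mem _ hγ _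
  rw [map_rep_map_rep, show γ * z = z * (z⁻¹ * γ * z⁻¹⁻¹) by group, ← map_rep_map_rep,
    map_rep_eq_of_mem hK hconj]

end IndexTwo

theorem orthogonal_induction_general
    {V : Type*} [NormedAddCommGroup V] [InnerProductSpace ℝ V] [FiniteDimensional ℝ V]
    {Γ : Type*} [Group Γ] (ρ : Γ →* (V ≃ₗᵢ[ℝ] V))
    (Γ₀ : Subgroup Γ) (hΓ₀ : Γ₀.index = 2) (z : Γ)
    (V₀ : Submodule ℝ V)
    (hV₀ : ∀ γ ∈ Γ₀, ∀ v ∈ V₀, ρ γ v ∈ V₀)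
    -- (ii) V = V₀ ⊕ ρ(z)(V₀)
    (hcompl : IsCompl V₀ (V₀.map ((ρ z).toLinearEquiv : V →ₗ[ℝ] V))) :
    ∃ (U₀ : Submodule ℝ V) (hU₀ : ∀ γ ∈ Γ₀, ∀ v ∈ U₀, ρ γ v ∈ U₀)
      (e : V₀ ≃ₗ[ℝ] U₀),
      (∀ γ (hγ : γ ∈ Γ₀) (v : V₀),
        ((e ⟨ρ γ (v : V), hV₀ γ hγ (v : V) v.2⟩ : U₀) : V) = ρ γ ((e v : U₀) : V)) ∧
      U₀.map ((ρ z).toLinearEquiv : V →ₗ[ℝ] V) = U₀ᗮ := by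
  set V₁ := V₀.map ((ρ z).toLinearEquiv : V →ₗ[ℝ] V)
  set D : V →ₗ[ℝ] V := (V₀.starProjection : V →ₗ[ℝ] V) - (V₁.starProjection : V →ₗ[ℝ] V)
  have hDsymm : D.IsSymmetric := V₀.starProjection_isSymmetric.sub V₁.starProjection_isSymmetric
  have hDγ : ∀ γ ∈ Γ₀, ∀ x, D (ρ γ x) = ρ γ (D x) := fun γ hγ =>
    Submodule.starProjection_sub_apply_of_map_eq _ (map_rep_eq_of_mem hV₀ hγ)
      (map_rep_map_rep_of_index_eq_two hV₀ hΓ₀ z hγ)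
  have hDz : ∀ x, (-D) (ρ z x) = ρ z (D x) := fun x => by
    rw [← Submodule.starProjection_sub_apply_of_map_eq _ rfl
      (map_rep_map_rep_self_of_index_eq_two hV₀ hΓ₀ z), neg_sub]
  set U₀ := posSpectralSubspace D
  have hU₀ : ∀ γ ∈ Γ₀, ∀ v ∈ U₀, ρ γ v ∈ U₀ := fun γ hγ v hv =>
    (map_posSpectralSubspace_of_conj (ρ γ).toLinearEquiv (hDγ γ hγ)).le
      (Submodule.mem_map_of_mem hv)
  have hzU₀ : U₀.map ((ρ z).toLinearEquiv : V →ₗ[ℝ] V) = U₀ᗮ := by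
    rw [map_posSpectralSubspace_of_conj _ hDz,
      hDsymm.orthogonal_posSpectralSubspace (Submodule.ker_starProjection_sub_eq_bot hcompl)]
  have hdisj := Submodule.disjoint_posSpectralSubspace_starProjection_sub V₀ V₁
  have hrank : finrank ℝ U₀ = finrank ℝ V₀ := by
    have hU := Submodule.two_mul_finrank_eq_of_isCompl_map (ρ z).toLinearEquiv
      (hzU₀ ▸ U₀.isCompl_orthogonal)
    have hV := Submodule.two_mul_finrank_eq_of_isCompl_map _ hcompl
    omega
  obtain ⟨e, he⟩ := Submodule.exists_linearEquiv_starProjection_apply hdisj hrank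
  refine ⟨U₀, hU₀, e, fun γ hγ v => ?_, hzU₀⟩
  refine Submodule.eq_of_starProjection_eq hdisj (e _).2 (hU₀ γ hγ _ (e v).2) ?_
  rw [he, Submodule.starProjection_apply_of_map_eq _ (map_rep_eq_of_mem hV₀ hγ), he]

/-- Orthogonal induction: let `ρ` be an orthogonal representation of `Γ` on a
finite-dimensional real inner product space `V`, `Γ₀ ≤ Γ` of index 2, `z ∉ Γ₀`, and
`V₀ ⊆ V` a `Γ₀`-invariant subspace which is a direct sum of absolutely irreducible
`Γ₀`-subrepresentations and satisfies `V = V₀ ⊕ ρ(z)(V₀)`.  Then there is a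
`Γ₀`-invariant subspace `U₀` isomorphic to `V₀` as a `Γ₀`-representation with
`V = U₀ ⊥ ρ(z)(U₀)`, i.e. `ρ(z)(U₀) = U₀ᗮ`. -/
theorem orthogonal_induction
    {V : Type*} [NormedAddCommGroup V] [InnerProductSpace ℝ V] [FiniteDimensional ℝ V]
    {Γ : Type*} [Group Γ] (ρ : Γ →* (V ≃ₗᵢ[ℝ] V))
    (Γ₀ : Subgroup Γ) (hΓ₀ : Γ₀.index = 2) (z : Γ) (hz : z ∉ Γ₀)
    (V₀ : Submodule ℝ V)
    (hV₀ : ∀ γ ∈ Γ₀, ∀ v ∈ V₀, ρ γ v ∈ V₀)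
    -- (i) V₀ is a direct sum of absolutely irreducible Γ₀-invariant subspaces
    (k : ℕ) (W : Fin k → Submodule ℝ V)
    (hWsum : iSup W = V₀)
    (hWindep : iSupIndep W)
    (hWinv : ∀ i, ∀ γ ∈ Γ₀, ∀ v ∈ W i, ρ γ v ∈ W i)
    (hWirr : ∀ i, W i ≠ ⊥ ∧
      ∀ W' ≤ W i, (∀ γ ∈ Γ₀, ∀ v ∈ W', ρ γ v ∈ W') → W' = ⊥ ∨ W' = W i)
    (hWabs : ∀ i, ∀ φ : V →ₗ[ℝ] V, (∀ v ∈ W i, φ v ∈ W i) →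
      (∀ γ ∈ Γ₀, ∀ v ∈ W i, φ (ρ γ v) = ρ γ (φ v)) →
      ∃ c : ℝ, ∀ v ∈ W i, φ v = c • v)
    -- (ii) V = V₀ ⊕ ρ(z)(V₀)
    (hcompl : IsCompl V₀ (V₀.map ((ρ z).toLinearEquiv : V →ₗ[ℝ] V))) :
    ∃ (U₀ : Submodule ℝ V) (hU₀ : ∀ γ ∈ Γ₀, ∀ v ∈ U₀, ρ γ v ∈ U₀)
      (e : V₀ ≃ₗ[ℝ] U₀),
      (∀ γ (hγ : γ ∈ Γ₀) (v : V₀),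
        ((e ⟨ρ γ (v : V), hV₀ γ hγ (v : V) v.2⟩ : U₀) : V) = ρ γ ((e v : U₀) : V)) ∧
      U₀.map ((ρ z).toLinearEquiv : V →ₗ[ℝ] V) = U₀ᗮ :=
  orthogonal_induction_general ρ Γ₀ hΓ₀ z V₀ hV₀ hcompl
end
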